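/- arXiv:2006.09745 — 5 statements merged into one kernel-verified Lean document; each statement's English description precedes it below -/
import Mathlib

section
/- Let 0 < μ ≤ S and let f : ℝ → ℝ be twice differentiable with μ ≤ f''(t) ≤ S for all t ∈ ℝ. Then for every x ∈ ℝ, the damped Newton step with step size ε = μ/S satisfies f(x − (μ/S)·f'(x)/f''(x)) ≤ f(x) − (μ/(2S))·f'(x)²/f''(x). -/
/-- Quadratic upper bound for a function with second derivative bounded above. -/
lemma quad_upper {S : ℝ} (hS : 0 < S) (f : ℝ → ℝ) (hf : Differentiable ℝ f)
    (hf' : Differentiable ℝ (deriv f))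
    (hbd : ∀ t, |deriv (deriv f) t| ≤ S) (x y : ℝ) :
    f y ≤ f x + deriv f x * (y - x) + S / 2 * (y - x) ^ 2 := by
  set g := deriv f with hg
  have hLip : ∀ a b : ℝ, |g b - g a| ≤ S * |b - a| := by
    intro a b
    have := Convex.norm_image_sub_le_of_norm_deriv_le (f := g)
      (fun t _ => hf' t) (C := S)
      (fun t _ => by simpa [hg, Real.norm_eq_abs] using hbd t)
      convex_univ (Set.mem_univ a) (Set.mem_univ b)
    simpa [Real.norm_eq_abs] using this
  set F : ℝ → ℝ := fun t => f t - f x - g x * (t - x) - S / 2 * (t - x) ^ 2 with hF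
  have hFdiff : Differentiable ℝ F := by
    apply Differentiable.sub
    apply Differentiable.sub
    apply Differentiable.sub hf (differentiable_const _)
    · exact (differentiable_const _).mul (differentiable_fun_id.sub (differentiable_const _))
    · exact (differentiable_const _).mul (((differentiable_fun_id.sub (differentiable_const _)).pow 2))
  have hFderiv : ∀ t, deriv F t = g t - g x - S * (t - x) := by
    intro t
    have h1 : HasDerivAt (fun t : ℝ => f t - f x - g x * (t - x) - S / 2 * (t - x) ^ 2)
        (g t - (g x * 1) - S / 2 * (2 * (t - x) ^ 1 * 1)) t := by
      exact (((hf t).hasDerivAt.sub_const _).sub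
        ((((hasDerivAt_id t).sub_const x).const_mul (g x)))).sub
        ((((hasDerivAt_id t).sub_const x).pow 2).const_mul (S / 2))
    have := h1.deriv
    rw [hF, this]; ring
  have hFx : F x = 0 := by simp [hF]
  have key : F y ≤ 0 := by
    rcases le_total x y with hxy | hxy
    · -- F antitone on [x, y]
      have hanti : AntitoneOn F (Set.Icc x y) := by
        apply antitoneOn_of_deriv_nonpos (convex_Icc x y) (hFdiff.continuous.continuousOn)
          (fun t _ => (hFdiff t).differentiableWithinAt)
        intro t ht
        rw [hFderiv]
        have ht' : x ≤ t := (interior_subset ht).1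
        have := hLip x t
        have habs : g t - g x ≤ S * (t - x) := by
          have : g t - g x ≤ |g t - g x| := le_abs_self _
          calc g t - g x ≤ |g t - g x| := le_abs_self _
            _ ≤ S * |t - x| := hLip x t
            _ = S * (t - x) := by rw [abs_of_nonneg (by linarith)]
        linarith
      have := hanti (Set.left_mem_Icc.2 hxy) (Set.right_mem_Icc.2 hxy) hxy
      linarith [hFx ▸ this]
    · -- F monotone on [y, x]
      have hmono : MonotoneOn F (Set.Icc y x) := by
        apply monotoneOn_of_deriv_nonneg (convex_Icc y x) (hFdiff.continuous.continuousOn)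
          (fun t _ => (hFdiff t).differentiableWithinAt)
        intro t ht
        rw [hFderiv]
        have ht' : t ≤ x := (interior_subset ht).2
        have habs : g x - g t ≤ S * (x - t) := by
          calc g x - g t ≤ |g x - g t| := le_abs_self _
            _ = |g t - g x| := abs_sub_comm _ _
            _ ≤ S * |t - x| := hLip x t
            _ = S * (x - t) := by rw [abs_sub_comm, abs_of_nonneg (by linarith)]
        linarith
      have := hmono (Set.left_mem_Icc.2 hxy) (Set.right_mem_Icc.2 hxy) hxy
      linarith [hFx ▸ this]
  have : f y - f x - g x * (y - x) - S / 2 * (y - x) ^ 2 ≤ 0 := key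
  linarith

/-- One-dimensional damped Newton descent: if `f` is twice differentiable with
`μ ≤ f'' ≤ S` everywhere (`0 < μ ≤ S`), then the Newton step damped by `ε = μ / S`
decreases `f` by at least `μ/(2S)` times the squared Newton decrement `f'(x)^2 / f''(x)`. -/
theorem damped_newton_descent {μ S : ℝ} (hμ : 0 < μ) (hμS : μ ≤ S)
    (f : ℝ → ℝ) (hf : Differentiable ℝ f) (hf' : Differentiable ℝ (deriv f))
    (hlow : ∀ t, μ ≤ deriv (deriv f) t) (hupp : ∀ t, deriv (deriv f) t ≤ S)
    (x : ℝ) :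
    f (x - (μ / S) * (deriv f x / deriv (deriv f) x)) ≤
      f x - (μ / (2 * S)) * ((deriv f x) ^ 2 / deriv (deriv f) x) := by
  have hS : 0 < S := lt_of_lt_of_le hμ hμS
  have hbd : ∀ t, |deriv (deriv f) t| ≤ S := fun t =>
    abs_le.2 ⟨by linarith [hlow t], hupp t⟩
  set G := deriv f x with hG
  set H := deriv (deriv f) x with hH
  have hHpos : 0 < H := lt_of_lt_of_le hμ (hlow x)
  set y := x - (μ / S) * (G / H) with hy
  have hquad := quad_upper hS f hf hf' hbd x y
  have hyx : y - x = -((μ / S) * (G / H)) := by rw [hy]; ring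
  rw [hyx] at hquad
  have halg : f x + G * (-((μ / S) * (G / H))) + S / 2 * (-((μ / S) * (G / H))) ^ 2 ≤
      f x - (μ / (2 * S)) * (G ^ 2 / H) := by
    have h1 : μ ≤ H := hlow x
    have hG2 : 0 ≤ G ^ 2 := sq_nonneg G
    have expand : f x + G * (-((μ / S) * (G / H))) + S / 2 * (-((μ / S) * (G / H))) ^ 2
        - (f x - (μ / (2 * S)) * (G ^ 2 / H))
        = (μ * G ^ 2 * (μ - H)) / (2 * S * H ^ 2) := by
      field_simp
      ring
    have hneg : (μ * G ^ 2 * (μ - H)) / (2 * S * H ^ 2) ≤ 0 :=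
      div_nonpos_of_nonpos_of_nonneg (by nlinarith [mul_nonneg hμ.le hG2]) (by positivity)
    linarith [expand ▸ hneg]
  calc f y ≤ _ := hquad
    _ ≤ _ := halg
end

section
/- Let 0 < μ ≤ S, let l₁,…,l_n : ℝ → ℝ be twice differentiable with μ ≤ l_i''(t) ≤ S for all t and all i, let B be a real n×N matrix whose columns all have unit Euclidean norm (Σ_i B_{ij}² = 1 for every j), let {1,…,N} be partitioned into nonempty sets I(1),…,I(K), and let φ₁,…,φ_K ≥ 0 with Σ_k φ_k = 1. Define L(β) = Σ_{i=1}^n l_i((Bβ)_i), Γ_j(β) = ∇_j L(β)/√(∇²_j L(β)), and ‖x‖_Φ = Σ_k φ_k max_{j∈I(k)} |x_j|. Fix β ∈ ℝ^N, and for each k let j_k ∈ I(k) maximize Γ_j(β)² over I(k), and let β⁺_k = β − (μ/S)(∇_{j_k} L(β)/∇²_{j_k} L(β)) e_{j_k}. Then Σ_{k=1}^K φ_k L(β⁺_k) ≤ L(β) − (μ/(2S²))·‖∇L(β)‖_Φ². -/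
open Finset

/-- First partial derivative `∇_j L(β) = ∑ i, l i '((Bβ) i) * B i j` of
`L(β) = ∑ i, l i ((Bβ) i)`. -/
noncomputable def gradL {n N : ℕ} (l : Fin n → ℝ → ℝ) (B : Matrix (Fin n) (Fin N) ℝ)
    (β : Fin N → ℝ) (j : Fin N) : ℝ :=
  ∑ i, deriv (l i) (B.mulVec β i) * B i j

/-- Second partial derivative `∇²_j L(β) = ∑ i, l i ''((Bβ) i) * B i j ^ 2` of
`L(β) = ∑ i, l i ((Bβ) i)`. -/
noncomputable def hessL {n N : ℕ} (l : Fin n → ℝ → ℝ) (B : Matrix (Fin n) (Fin N) ℝ)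
    (β : Fin N → ℝ) (j : Fin N) : ℝ :=
  ∑ i, deriv (deriv (l i)) (B.mulVec β i) * (B i j) ^ 2

lemma taylor_upper (l : ℝ → ℝ) (hd : Differentiable ℝ l) (hd2 : Differentiable ℝ (deriv l))
    {S : ℝ} (hS : ∀ t, deriv (deriv l) t ≤ S) (a c : ℝ) :
    l (a + c) ≤ l a + deriv l a * c + S / 2 * c ^ 2 := by
  set G : ℝ → ℝ := fun x => deriv l a + S * (x - a) - deriv l x with hGdef
  set F : ℝ → ℝ := fun x => l a + deriv l a * (x - a) + S / 2 * (x - a) ^ 2 - l x with hFdef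
  have hid : ∀ x : ℝ, HasDerivAt (fun x : ℝ => x - a) 1 x :=
    fun x => (hasDerivAt_id x).sub_const a
  have hF' : ∀ x, HasDerivAt F (G x) x := by
    intro x
    have h2 := ((hid x).const_mul (deriv l a)).const_add (l a)
    have h3 := ((hid x).pow 2).const_mul (S / 2)
    have h4 := (h2.add h3).sub (hd x).hasDerivAt
    refine h4.congr_deriv ?_
    simp [hGdef]; ring
  have hG' : ∀ x, HasDerivAt G (S - deriv (deriv l) x) x := by
    intro x
    have h2 := ((hid x).const_mul S).const_add (deriv l a)
    have h4 := h2.sub (hd2 x).hasDerivAt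
    refine h4.congr_deriv ?_; ring
  have hGmono : Monotone G := by
    apply monotone_of_deriv_nonneg (fun x => (hG' x).differentiableAt)
    intro x
    rw [(hG' x).deriv]
    linarith [hS x]
  have hGa : G a = 0 := by simp [hGdef]
  have hFdiff : Differentiable ℝ F := fun x => (hF' x).differentiableAt
  have hFa : F a = 0 := by simp [hFdef]
  have key : 0 ≤ F (a + c) := by
    rcases le_or_gt 0 c with hc | hc
    · have hmono : MonotoneOn F (Set.Icc a (a + c)) := by
        apply monotoneOn_of_deriv_nonneg (convex_Icc a (a + c))
          hFdiff.continuous.continuousOn hFdiff.differentiableOn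
        intro x hx
        rw [interior_Icc] at hx
        rw [(hF' x).deriv]
        have := hGmono hx.1.le
        linarith [hGa ▸ this]
      have := hmono (Set.left_mem_Icc.2 (by linarith)) (Set.right_mem_Icc.2 (by linarith))
        (by linarith)
      linarith [hFa ▸ this]
    · have hanti : AntitoneOn F (Set.Icc (a + c) a) := by
        apply antitoneOn_of_deriv_nonpos (convex_Icc (a + c) a)
          hFdiff.continuous.continuousOn hFdiff.differentiableOn
        intro x hx
        rw [interior_Icc] at hx
        rw [(hF' x).deriv]
        have := hGmono hx.2.le
        linarith [hGa ▸ this]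
      have := hanti (Set.left_mem_Icc.2 (by linarith)) (Set.right_mem_Icc.2 (by linarith))
        (by linarith)
      linarith [hFa ▸ this]
  have : F (a + c) = l a + deriv l a * c + S / 2 * c ^ 2 - l (a + c) := by
    simp [hFdef]
  linarith [this ▸ key]


set_option maxHeartbeats 4000000

/-- One-step expected descent inequality (equation (9)) for the Heterogeneous Newton
Boosting Machine, viewed as randomized coordinate descent: sampling the subclass `k`
with probability `φ k`, taking the coordinate `jsel k ∈ I k` maximizing the squared
Newton decrement `Γ_j(β)² = ∇_j L(β)² / ∇²_j L(β)`, and performing a Newton step damped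
by `ε = μ / S`, the expected loss decreases by at least `(μ/(2S²)) ‖∇L(β)‖_Φ²`. -/
theorem hnbm_expected_descent {n N K : ℕ} {μ S : ℝ} (hμ : 0 < μ) (hμS : μ ≤ S)
    (l : Fin n → ℝ → ℝ)
    (hdiff : ∀ i, Differentiable ℝ (l i))
    (hdiff2 : ∀ i, Differentiable ℝ (deriv (l i)))
    (hlow : ∀ i t, μ ≤ deriv (deriv (l i)) t)
    (hupp : ∀ i t, deriv (deriv (l i)) t ≤ S)
    (B : Matrix (Fin n) (Fin N) ℝ)
    (hunit : ∀ j, ∑ i, (B i j) ^ 2 = 1)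
    (I : Fin K → Finset (Fin N)) (hne : ∀ k, (I k).Nonempty)
    (hdisj : ∀ k k', k ≠ k' → Disjoint (I k) (I k'))
    (hcover : ∀ j, ∃ k, j ∈ I k)
    (φ : Fin K → ℝ) (hφ : ∀ k, 0 ≤ φ k) (hφ1 : ∑ k, φ k = 1)
    (β : Fin N → ℝ) (jsel : Fin K → Fin N)
    (hjmem : ∀ k, jsel k ∈ I k)
    (hjmax : ∀ k, ∀ j ∈ I k,
      (gradL l B β j) ^ 2 / hessL l B β j ≤
        (gradL l B β (jsel k)) ^ 2 / hessL l B β (jsel k)) :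
    (∑ k, φ k * ∑ i, l i (B.mulVec
        (β - Pi.single (jsel k)
          ((μ / S) * (gradL l B β (jsel k) / hessL l B β (jsel k)))) i)) ≤
      (∑ i, l i (B.mulVec β i))
        - (μ / (2 * S ^ 2)) *
            (∑ k, φ k * ((I k).sup' (hne k) (fun j => |gradL l B β j|))) ^ 2 := by
  have hS : 0 < S := lt_of_lt_of_le hμ hμS
  set T : Fin K → ℝ := fun k => ∑ i, l i (B.mulVec
      (β - Pi.single (jsel k)
        ((μ / S) * (gradL l B β (jsel k) / hessL l B β (jsel k)))) i) with hT
  set L : ℝ := ∑ i, l i (B.mulVec β i) with hL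
  set M : Fin K → ℝ := fun k => (I k).sup' (hne k) (fun j => |gradL l B β j|) with hM
  show (∑ k, φ k * T k) ≤ L - (μ / (2 * S ^ 2)) * (∑ k, φ k * M k) ^ 2
  clear_value T L M
  -- hessian bounds
  have hhlow : ∀ j, μ ≤ hessL l B β j := by
    intro j
    have : μ * 1 ≤ hessL l B β j := by
      rw [← hunit j, Finset.mul_sum, hessL]
      apply Finset.sum_le_sum
      intro i _
      exact mul_le_mul_of_nonneg_right (hlow i _) (sq_nonneg _)
    linarith
  have hhupp : ∀ j, hessL l B β j ≤ S := by
    intro j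
    have : hessL l B β j ≤ S * 1 := by
      rw [← hunit j, Finset.mul_sum, hessL]
      apply Finset.sum_le_sum
      intro i _
      exact mul_le_mul_of_nonneg_right (hupp i _) (sq_nonneg _)
    linarith
  have hhpos : ∀ j, 0 < hessL l B β j := fun j => lt_of_lt_of_le hμ (hhlow j)
  have hMnn : ∀ k, 0 ≤ M k := by
    intro k
    rw [hM]
    exact Finset.le_sup'_of_le _ (hjmem k) (abs_nonneg _)
  -- per-k bound
  have hperk : ∀ k, T k ≤ L - (μ / (2 * S ^ 2)) * (M k) ^ 2 := by
    intro k
    rw [hT]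
    simp only
    set g : ℝ := gradL l B β (jsel k) with hg
    set h : ℝ := hessL l B β (jsel k) with hh
    set s : ℝ := (μ / S) * (g / h) with hs
    clear_value s h g
    set j := jsel k with hj
    clear_value j
    have hhpos' : 0 < h := by rw [hh, hj]; exact hhpos _
    have hh0 : h ≠ 0 := ne_of_gt hhpos'
    have hS0 : S ≠ 0 := ne_of_gt hS
    -- the new coordinates of B *ᵥ β⁺
    have hmv : ∀ i, B.mulVec (β - Pi.single j s) i = B.mulVec β i + (-(B i j * s)) := by
      intro i
      rw [Matrix.mulVec_sub]
      simp only [Matrix.mulVec_single, Pi.sub_apply, Pi.smul_apply, Matrix.col_apply, MulOpposite.smul_eq_mul_unop, MulOpposite.unop_op]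
      ring
    -- Taylor step
    have hstep : (∑ i, l i (B.mulVec (β - Pi.single j s) i)) ≤ L - s * g + S / 2 * s ^ 2 := by
      have hb : ∀ i, l i (B.mulVec (β - Pi.single j s) i) ≤
          l i (B.mulVec β i) + deriv (l i) (B.mulVec β i) * (-(B i j * s))
            + S / 2 * (-(B i j * s)) ^ 2 := by
        intro i
        rw [hmv i]
        exact taylor_upper (l i) (hdiff i) (hdiff2 i) (hupp i) _ _
      calc (∑ i, l i (B.mulVec (β - Pi.single j s) i))
          ≤ ∑ i, (l i (B.mulVec β i) + deriv (l i) (B.mulVec β i) * (-(B i j * s))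
            + S / 2 * (-(B i j * s)) ^ 2) := Finset.sum_le_sum (fun i _ => hb i)
        _ = L - s * g + S / 2 * s ^ 2 * (∑ i, (B i j) ^ 2) := by
            have e2 : (∑ i, deriv (l i) (B.mulVec β i) * (-(B i j * s))) = -(s * g) := by
              rw [hg, gradL, Finset.mul_sum, ← Finset.sum_neg_distrib]
              exact Finset.sum_congr rfl (fun i _ => by ring)
            have e3 : (∑ i, S / 2 * (-(B i j * s)) ^ 2)
                = S / 2 * s ^ 2 * (∑ i, (B i j) ^ 2) := by
              rw [Finset.mul_sum]
              exact Finset.sum_congr rfl (fun i _ => by ring)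
            rw [Finset.sum_add_distrib, Finset.sum_add_distrib, e2, e3, hL]
            ring
        _ = L - s * g + S / 2 * s ^ 2 := by rw [hunit j]; ring
    -- algebraic bound on the decrease
    have halg : - (s * g) + S / 2 * s ^ 2 ≤ -(μ / (2 * S)) * (g ^ 2 / h) := by
      have heq : - (s * g) + S / 2 * s ^ 2 = (μ / S) * (g ^ 2 / h) * (μ / (2 * h) - 1) := by
        rw [hs]; field_simp; ring
      have h1 : μ / (2 * h) - 1 ≤ -(1 / 2) := by
        have : μ / (2 * h) ≤ 1 / 2 := by
          rw [div_le_div_iff₀ (by linarith) (by norm_num)]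
          linarith [hhlow j]
        linarith
      have h2 : 0 ≤ (μ / S) * (g ^ 2 / h) :=
        mul_nonneg (div_nonneg hμ.le hS.le) (div_nonneg (sq_nonneg g) hhpos'.le)
      calc - (s * g) + S / 2 * s ^ 2 = (μ / S) * (g ^ 2 / h) * (μ / (2 * h) - 1) := heq
        _ ≤ (μ / S) * (g ^ 2 / h) * (-(1 / 2)) := mul_le_mul_of_nonneg_left h1 h2
        _ = -(μ / (2 * S)) * (g ^ 2 / h) := by ring
    -- Γ² dominates M²/S
    have hMS : (M k) ^ 2 / S ≤ g ^ 2 / h := by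
      obtain ⟨j', hj'mem, hj'⟩ := Finset.exists_mem_eq_sup' (hne k)
        (fun j => |gradL l B β j|)
      have hM2 : (M k) ^ 2 = (gradL l B β j') ^ 2 := by
        rw [hM]; simp only [hj', sq_abs]
      rw [hM2]
      calc (gradL l B β j') ^ 2 / S ≤ (gradL l B β j') ^ 2 / hessL l B β j' :=
            div_le_div_of_nonneg_left (sq_nonneg _) (hhpos j') (hhupp j')
        _ ≤ g ^ 2 / h := by rw [hg, hh, hj]; exact hjmax k j' hj'mem
    have h4 := mul_le_mul_of_nonneg_left hMS
      (show (0:ℝ) ≤ μ / (2 * S) from div_nonneg hμ.le (by linarith))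
    have h5 : μ / (2 * S) * ((M k) ^ 2 / S) = μ / (2 * S ^ 2) * (M k) ^ 2 := by
      ring
    linarith [hstep, halg, h4, h5]
  -- sum over k with weights φ
  have hsum : (∑ k, φ k * T k) ≤
      L - (μ / (2 * S ^ 2)) * ∑ k, φ k * (M k) ^ 2 := by
    calc (∑ k, φ k * T k)
        ≤ ∑ k, φ k * (L - (μ / (2 * S ^ 2)) * (M k) ^ 2) :=
          Finset.sum_le_sum (fun k _ => mul_le_mul_of_nonneg_left (hperk k) (hφ k))
      _ = (∑ k, φ k) * L - (μ / (2 * S ^ 2)) * ∑ k, φ k * (M k) ^ 2 := by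
          rw [Finset.sum_mul, Finset.mul_sum, ← Finset.sum_sub_distrib]
          apply Finset.sum_congr rfl
          intro k _; ring
      _ = L - (μ / (2 * S ^ 2)) * ∑ k, φ k * (M k) ^ 2 := by rw [hφ1, one_mul]
  -- Cauchy–Schwarz: (∑ φ M)² ≤ ∑ φ M²
  have hCS : (∑ k, φ k * M k) ^ 2 ≤ ∑ k, φ k * (M k) ^ 2 := by
    have := Finset.sum_mul_sq_le_sq_mul_sq Finset.univ
      (fun k => Real.sqrt (φ k)) (fun k => Real.sqrt (φ k) * M k)
    have e1 : ∀ k : Fin K, Real.sqrt (φ k) * (Real.sqrt (φ k) * M k) = φ k * M k := by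
      intro k; rw [← mul_assoc, Real.mul_self_sqrt (hφ k)]
    have e2 : ∀ k : Fin K, Real.sqrt (φ k) ^ 2 = φ k := fun k => Real.sq_sqrt (hφ k)
    have e3 : ∀ k : Fin K, (Real.sqrt (φ k) * M k) ^ 2 = φ k * (M k) ^ 2 := by
      intro k; rw [mul_pow, Real.sq_sqrt (hφ k)]
    simp only [e1, e2, e3, hφ1, one_mul] at this
    exact this
  have hc2 : 0 ≤ μ / (2 * S ^ 2) := by positivity
  calc (∑ k, φ k * T k)
      ≤ L - (μ / (2 * S ^ 2)) * ∑ k, φ k * (M k) ^ 2 := hsum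
    _ ≤ L - (μ / (2 * S ^ 2)) * (∑ k, φ k * M k) ^ 2 := by nlinarith [hCS, hc2]
end

section
/- Let μ > 0, let l₁,…,l_n : ℝ → ℝ be differentiable and μ-strongly convex (i.e. l_i(t) ≥ l_i(s) + l_i'(s)(t−s) + (μ/2)(t−s)² for all s, t), let B be a real n×N matrix with column range V = Range(B), define L(β) = Σ_{i=1}^n l_i((Bβ)_i), and suppose β* is a global minimizer of L. Let {1,…,N} be partitioned into nonempty sets I(1),…,I(K), let φ₁,…,φ_K ≥ 0 with Σ_k φ_k = 1, define ‖x‖_Φ = Σ_k φ_k max_{j∈I(k)} |x_j|, and suppose Θ ≥ 0 satisfies ‖Bᵀc‖_Φ ≥ Θ‖c‖ for every nonzero c ∈ V. Then for every β ∈ ℝ^N, ‖∇L(β)‖_Φ² ≥ 2μΘ²(L(β) − L(β*)). -/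
open Finset
open scoped RealInnerProductSpace

/-- The column range `Range(B)` of a matrix `B`, as a subspace of Euclidean space:
the span of the columns of `B`. -/
noncomputable def colSpan {n N : ℕ} (B : Matrix (Fin n) (Fin N) ℝ) :
    Submodule ℝ (EuclideanSpace ℝ (Fin n)) :=
  Submodule.span ℝ
    (Set.range fun j : Fin N => ((WithLp.equiv 2 (Fin n → ℝ)).symm fun i => B i j))

/-- Equation (10) in the proof of Theorem 1: a Polyak–Łojasiewicz-type lower bound in the
Φ-norm. If each `l i` is differentiable and `μ`-strongly convex, `β*` globally minimizes
`L(β) = ∑ i, l i ((Bβ) i)`, and `Θ ≥ 0` lower-bounds the minimum cosine angle (i.e.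
`‖Bᵀc‖_Φ ≥ Θ ‖c‖` for every nonzero `c ∈ Range(B)`), then
`‖∇L(β)‖_Φ² ≥ 2 μ Θ² (L(β) - L(β*))`, where `∇_j L(β) = ∑ i, l i '((Bβ) i) * B i j`
and `‖x‖_Φ = ∑ k, φ k * max_{j ∈ I k} |x j|`. -/
theorem pl_lower_bound_phi_norm {n N K : ℕ} {μ : ℝ} (hμ : 0 < μ)
    (l : Fin n → ℝ → ℝ) (hdiff : ∀ i, Differentiable ℝ (l i))
    (hconv : ∀ i s t, l i s + deriv (l i) s * (t - s) + (μ / 2) * (t - s) ^ 2 ≤ l i t)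
    (B : Matrix (Fin n) (Fin N) ℝ)
    (βstar : Fin N → ℝ)
    (hmin : ∀ β, (∑ i, l i (B.mulVec βstar i)) ≤ ∑ i, l i (B.mulVec β i))
    (I : Fin K → Finset (Fin N)) (hne : ∀ k, (I k).Nonempty)
    (hdisj : ∀ k k', k ≠ k' → Disjoint (I k) (I k'))
    (hcover : ∀ j, ∃ k, j ∈ I k)
    (φ : Fin K → ℝ) (hφ : ∀ k, 0 ≤ φ k) (hφ1 : ∑ k, φ k = 1)
    (Θ : ℝ) (hΘ0 : 0 ≤ Θ)
    (hΘ : ∀ c : EuclideanSpace ℝ (Fin n), c ∈ colSpan B → c ≠ 0 →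
      Θ * ‖c‖ ≤ ∑ k, φ k * ((I k).sup' (hne k) (fun j => |∑ i, B i j * c i|)))
    (β : Fin N → ℝ) :
    2 * μ * Θ ^ 2 * ((∑ i, l i (B.mulVec β i)) - ∑ i, l i (B.mulVec βstar i)) ≤
      (∑ k, φ k * ((I k).sup' (hne k)
        (fun j => |∑ i, deriv (l i) (B.mulVec β i) * B i j|))) ^ 2 := by
  classical
  set w : Fin n → ℝ := B.mulVec β with hw
  set ws : Fin n → ℝ := B.mulVec βstar with hws
  set g : EuclideanSpace ℝ (Fin n) :=
    (WithLp.equiv 2 (Fin n → ℝ)).symm (fun i => deriv (l i) (w i)) with hg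
  set u : EuclideanSpace ℝ (Fin n) :=
    (WithLp.equiv 2 (Fin n → ℝ)).symm (fun i => w i - ws i) with hu
  have hgi : ∀ i, g i = deriv (l i) (w i) := fun i => rfl
  have hui : ∀ i, u i = w i - ws i := fun i => rfl
  -- u belongs to the column span
  have humem : u ∈ colSpan B := by
    have hpi : (fun i => w i - ws i) = ∑ j, (β j - βstar j) • (fun i => B i j) := by
      funext i
      simp only [hw, hws, Matrix.mulVec, dotProduct, Finset.sum_apply,
        Pi.smul_apply, smul_eq_mul, Pi.sub_apply]
      rw [← Finset.sum_sub_distrib]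
      exact Finset.sum_congr rfl fun j _ => by ring
    have husum : u = ∑ j, (β j - βstar j) •
        ((WithLp.equiv 2 (Fin n → ℝ)).symm fun i => B i j) := by
      calc u = (WithLp.linearEquiv 2 ℝ (Fin n → ℝ)).symm (fun i => w i - ws i) := rfl
      _ = ∑ j, (β j - βstar j) •
          (WithLp.linearEquiv 2 ℝ (Fin n → ℝ)).symm (fun i => B i j) := by
          rw [hpi, map_sum]
          simp
      _ = _ := rfl
    rw [husum]
    exact Submodule.sum_mem _ fun j _ =>
      Submodule.smul_mem _ _ (Submodule.subset_span ⟨j, rfl⟩)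
  -- projection
  set gV : EuclideanSpace ℝ (Fin n) :=
    ((colSpan B).orthogonalProjection g : EuclideanSpace ℝ (Fin n)) with hgV
  have hgVmem : gV ∈ colSpan B := ((colSpan B).orthogonalProjection g).2
  have hperp : g - gV ∈ (colSpan B)ᗮ := (colSpan B).sub_starProjection_mem_orthogonal g
  have hinner_eq : ∀ v ∈ colSpan B, (⟪v, g⟫ = ⟪v, gV⟫) := by
    intro v hv
    have h0 : ⟪v, g - gV⟫ = 0 := hperp v hv
    rw [inner_sub_right] at h0
    linarith
  -- the gradient equals B^T gV componentwise
  have hcol : ∀ j : Fin N, (∑ i, B i j * gV i) = ∑ i, deriv (l i) (w i) * B i j := by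
    intro j
    have hmem : ((WithLp.equiv 2 (Fin n → ℝ)).symm fun i => B i j) ∈ colSpan B :=
      Submodule.subset_span ⟨j, rfl⟩
    have h := hinner_eq _ hmem
    simp only [PiLp.inner_apply, RCLike.inner_apply, conj_trivial,
      WithLp.equiv_symm_apply, PiLp.toLp_apply] at h
    rw [Finset.sum_congr rfl fun i _ => mul_comm (B i j) (gV i), ← h]
    exact Finset.sum_congr rfl fun i _ => by rw [hgi, mul_comm]
  -- strong convexity estimate
  have hD : (∑ i, l i (w i)) - (∑ i, l i (ws i)) ≤ ⟪g, u⟫ - μ / 2 * ‖u‖ ^ 2 := by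
    have hsum : ∑ i, (l i (w i) + deriv (l i) (w i) * (ws i - w i)
        + μ / 2 * (ws i - w i) ^ 2) ≤ ∑ i, l i (ws i) :=
      Finset.sum_le_sum fun i _ => hconv i (w i) (ws i)
    have hip : ⟪g, u⟫ = ∑ i, deriv (l i) (w i) * (w i - ws i) := by
      simp [PiLp.inner_apply, RCLike.inner_apply, hg, hu, mul_comm]
    have hnorm : ‖u‖ ^ 2 = ∑ i, (w i - ws i) ^ 2 := by
      rw [← real_inner_self_eq_norm_sq, PiLp.inner_apply]
      simp [PiLp.inner_apply, RCLike.inner_apply, hu, sq]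
    rw [hip, hnorm]
    simp only [Finset.sum_add_distrib] at hsum
    have e1 : ∑ i, deriv (l i) (w i) * (ws i - w i)
        = -∑ i, deriv (l i) (w i) * (w i - ws i) := by
      rw [← Finset.sum_neg_distrib]
      exact Finset.sum_congr rfl fun i _ => by ring
    have e2 : (∑ i, μ / 2 * (ws i - w i) ^ 2) = μ / 2 * ∑ i, (w i - ws i) ^ 2 := by
      rw [Finset.mul_sum]
      exact Finset.sum_congr rfl fun i _ => by ring
    rw [e1, e2] at hsum
    linarith [hsum]
  by_cases hgV0 : gV = 0
  · -- projection is zero: inner product vanishes, so L(β) ≤ L(β*)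
    have hip0 : ⟪g, u⟫ = 0 := by
      have := hinner_eq u humem
      rw [hgV0] at this
      simp at this
      rw [real_inner_comm]
      simpa using this
    have hD0 : (∑ i, l i (w i)) - (∑ i, l i (ws i)) ≤ 0 := by
      have : 0 ≤ μ / 2 * ‖u‖ ^ 2 := by positivity
      linarith [hD, hip0]
    have hrhs : 0 ≤ (∑ k, φ k * ((I k).sup' (hne k)
        (fun j => |∑ i, deriv (l i) (B.mulVec β i) * B i j|))) ^ 2 := sq_nonneg _
    nlinarith [mul_nonneg (mul_nonneg (by linarith : (0:ℝ) ≤ 2 * μ) (sq_nonneg Θ))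
      (neg_nonneg.mpr hD0)]
  · -- main case
    have hkey := hΘ gV hgVmem hgV0
    have hΦeq : (∑ k, φ k * ((I k).sup' (hne k) (fun j => |∑ i, B i j * gV i|)))
        = ∑ k, φ k * ((I k).sup' (hne k)
          (fun j => |∑ i, deriv (l i) (B.mulVec β i) * B i j|)) := by
      refine Finset.sum_congr rfl fun k _ => ?_
      congr 1
      exact Finset.sup'_congr (hne k) rfl fun j _ => by rw [hcol j]
    rw [hΦeq] at hkey
    set Φ := ∑ k, φ k * ((I k).sup' (hne k)
      (fun j => |∑ i, deriv (l i) (B.mulVec β i) * B i j|)) with hΦ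
    have hip_le : ⟪g, u⟫ ≤ ‖gV‖ * ‖u‖ := by
      have h' : ⟪g, u⟫ = ⟪gV, u⟫ := by
        calc ⟪g, u⟫ = ⟪u, g⟫ := real_inner_comm u g
        _ = ⟪u, gV⟫ := hinner_eq u humem
        _ = ⟪gV, u⟫ := real_inner_comm gV u
      rw [h']
      exact real_inner_le_norm gV u
    have hDle : (∑ i, l i (w i)) - (∑ i, l i (ws i)) ≤ ‖gV‖ * ‖u‖ - μ / 2 * ‖u‖ ^ 2 := by
      linarith [hD, hip_le]
    have h1 : 2 * μ * ((∑ i, l i (w i)) - (∑ i, l i (ws i))) ≤ ‖gV‖ ^ 2 := by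
      nlinarith [sq_nonneg (‖gV‖ - μ * ‖u‖), hμ]
    have h2 : 2 * μ * Θ ^ 2 * ((∑ i, l i (w i)) - (∑ i, l i (ws i))) ≤ (Θ * ‖gV‖) ^ 2 := by
      nlinarith [mul_le_mul_of_nonneg_left h1 (sq_nonneg Θ)]
    have h3 : (Θ * ‖gV‖) ^ 2 ≤ Φ ^ 2 := by
      have h0 : 0 ≤ Θ * ‖gV‖ := mul_nonneg hΘ0 (norm_nonneg _)
      exact pow_le_pow_left₀ h0 hkey 2
    calc 2 * μ * Θ ^ 2 * ((∑ i, l i (w i)) - (∑ i, l i (ws i))) ≤ (Θ * ‖gV‖) ^ 2 := h2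
    _ ≤ Φ ^ 2 := h3
end

section
/- Let 0 < μ ≤ S, let l₁,…,l_n : ℝ → ℝ be twice differentiable with μ ≤ l_i''(t) ≤ S for all t and all i, let B be a real n×N matrix whose columns all have unit Euclidean norm, define L(β) = Σ_{i=1}^n l_i((Bβ)_i), and suppose β* is a global minimizer of L. Let {1,…,N} be partitioned into nonempty sets I(1),…,I(K), let φ₁,…,φ_K ≥ 0 with Σ_k φ_k = 1, define ‖x‖_Φ = Σ_k φ_k max_{j∈I(k)} |x_j|, and suppose Θ ≥ 0 satisfies ‖Bᵀc‖_Φ ≥ Θ‖c‖ for every nonzero c ∈ Range(B). Fix β ∈ ℝ^N, for each k let j_k ∈ I(k) maximize Γ_j(β)² = ∇_j L(β)²/∇²_j L(β) over j ∈ I(k), and let β⁺_k = β − (μ/S)(∇_{j_k} L(β)/∇²_{j_k} L(β)) e_{j_k}. Then Σ_{k=1}^K φ_k (L(β⁺_k) − L(β*)) ≤ (1 − (μ²/S²)Θ²)(L(β) − L(β*)). -/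
open Finset

lemma taylor_upper' (f : ℝ → ℝ) (hf : Differentiable ℝ f) (hf' : Differentiable ℝ (deriv f))
    (C : ℝ) (hC : ∀ t, deriv (deriv f) t ≤ C) (a d : ℝ) :
    f (a + d) ≤ f a + deriv f a * d + C / 2 * d ^ 2 := by
  set ψ : ℝ → ℝ := fun t => f t - f a - deriv f a * (t - a) - C / 2 * (t - a) ^ 2 with hψ
  have hψd : Differentiable ℝ ψ := by
    apply Differentiable.sub
    apply Differentiable.sub
    · exact hf.sub_const _
    · exact (differentiable_id.sub_const a).const_mul _
    · exact ((differentiable_id.sub_const a).pow 2).const_mul _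
  have hderiv : ∀ t, deriv ψ t = deriv f t - deriv f a - C * (t - a) := by
    intro t
    have h1 : HasDerivAt (fun t : ℝ => deriv f a * (t - a)) (deriv f a) t := by
      simpa using ((hasDerivAt_id t).sub_const a).const_mul (deriv f a)
    have h2 : HasDerivAt (fun t : ℝ => C / 2 * (t - a) ^ 2) (C * (t - a)) t := by
      have := (((hasDerivAt_id t).sub_const a).pow 2).const_mul (C / 2)
      exact this.congr_deriv (by simp; ring)
    have h3 : HasDerivAt f (deriv f t) t := (hf t).hasDerivAt
    have := ((h3.sub_const (f a)).sub h1).sub h2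
    exact this.deriv
  have hψ'd : Differentiable ℝ (deriv ψ) := by
    rw [show deriv ψ = fun t => deriv f t - deriv f a - C * (t - a) from funext hderiv]
    exact ((hf'.sub_const _).sub (((differentiable_id.sub_const a).const_mul _)))
  have hderiv2 : ∀ t, deriv (deriv ψ) t ≤ 0 := by
    intro t
    rw [show deriv ψ = fun t => deriv f t - deriv f a - C * (t - a) from funext hderiv]
    have h2 : HasDerivAt (fun t : ℝ => C * (t - a)) C t := by
      simpa using ((hasDerivAt_id t).sub_const a).const_mul C
    have h3 : HasDerivAt (deriv f) (deriv (deriv f) t) t := (hf' t).hasDerivAt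
    have := ((h3.sub_const (deriv f a)).sub h2).deriv
    rw [show deriv (fun t => deriv f t - deriv f a - C * (t - a)) t = deriv (deriv f) t - C from this]
    linarith [hC t]
  have hanti : Antitone (deriv ψ) := antitone_of_deriv_nonpos hψ'd hderiv2
  have hψ'a : deriv ψ a = 0 := by rw [hderiv]; ring
  have key : ψ (a + d) ≤ ψ a := by
    rcases le_total a (a + d) with h | h
    · have : AntitoneOn ψ (Set.Ici a) := by
        apply antitoneOn_of_deriv_nonpos (convex_Ici a) hψd.continuous.continuousOn
          hψd.differentiableOn
        intro x hx
        rw [interior_Ici] at hx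
        have := hanti (le_of_lt hx)
        rw [hψ'a] at this; exact this
      exact this (Set.self_mem_Ici) h h
    · have : MonotoneOn ψ (Set.Iic a) := by
        apply monotoneOn_of_deriv_nonneg (convex_Iic a) hψd.continuous.continuousOn
          hψd.differentiableOn
        intro x hx
        rw [interior_Iic] at hx
        have := hanti (le_of_lt hx)
        rw [hψ'a] at this; linarith
      exact this h Set.self_mem_Iic h
  have h0 : ψ a = 0 := by simp [hψ]
  have he : ψ (a + d) = f (a + d) - f a - deriv f a * d - C / 2 * d ^ 2 := by simp [hψ]
  rw [h0] at key; rw [he] at key; linarith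

lemma taylor_lower' (f : ℝ → ℝ) (hf : Differentiable ℝ f) (hf' : Differentiable ℝ (deriv f))
    (m : ℝ) (hm : ∀ t, m ≤ deriv (deriv f) t) (a d : ℝ) :
    f a + deriv f a * d + m / 2 * d ^ 2 ≤ f (a + d) := by
  have hneg : Differentiable ℝ (fun t => -f t) := hf.neg
  have hd1 : deriv (fun t => -f t) = fun t => -deriv f t := funext fun t => deriv.neg
  have hneg' : Differentiable ℝ (deriv (fun t => -f t)) := by rw [hd1]; exact hf'.neg
  have hC : ∀ t, deriv (deriv (fun t => -f t)) t ≤ -m := by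
    intro t; rw [hd1]
    have : deriv (fun t => -deriv f t) t = -deriv (deriv f) t := deriv.neg
    rw [this]; linarith [hm t]
  have := taylor_upper' _ hneg hneg' (-m) hC a d
  rw [hd1] at this
  simp only at this
  linarith

/-- Single-iteration form of Theorem 1: one step of the Heterogeneous Newton Boosting
Machine with learning rate `ε = μ / S`—sampling subclass `k` with probability `φ k` and
descending along the coordinate of `I k` maximizing the squared Newton decrement—contracts
the expected optimality gap by the factor `1 - (μ²/S²) Θ²`. -/
theorem hnbm_one_step_contraction {n N K : ℕ} {μ S : ℝ} (hμ : 0 < μ) (hμS : μ ≤ S)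
    (l : Fin n → ℝ → ℝ)
    (hdiff : ∀ i, Differentiable ℝ (l i))
    (hdiff2 : ∀ i, Differentiable ℝ (deriv (l i)))
    (hlow : ∀ i t, μ ≤ deriv (deriv (l i)) t)
    (hupp : ∀ i t, deriv (deriv (l i)) t ≤ S)
    (B : Matrix (Fin n) (Fin N) ℝ)
    (hunit : ∀ j, ∑ i, (B i j) ^ 2 = 1)
    (βstar : Fin N → ℝ)
    (hmin : ∀ β, (∑ i, l i (B.mulVec βstar i)) ≤ ∑ i, l i (B.mulVec β i))
    (I : Fin K → Finset (Fin N)) (hne : ∀ k, (I k).Nonempty)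
    (hdisj : ∀ k k', k ≠ k' → Disjoint (I k) (I k'))
    (hcover : ∀ j, ∃ k, j ∈ I k)
    (φ : Fin K → ℝ) (hφ : ∀ k, 0 ≤ φ k) (hφ1 : ∑ k, φ k = 1)
    (Θ : ℝ) (hΘ0 : 0 ≤ Θ)
    (hΘ : ∀ c : EuclideanSpace ℝ (Fin n), c ∈ colSpan B → c ≠ 0 →
      Θ * ‖c‖ ≤ ∑ k, φ k * ((I k).sup' (hne k) (fun j => |∑ i, B i j * c i|)))
    (β : Fin N → ℝ) (jsel : Fin K → Fin N)
    (hjmem : ∀ k, jsel k ∈ I k)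
    (hjmax : ∀ k, ∀ j ∈ I k,
      (gradL l B β j) ^ 2 / hessL l B β j ≤
        (gradL l B β (jsel k)) ^ 2 / hessL l B β (jsel k)) :
    (∑ k, φ k * ((∑ i, l i (B.mulVec
        (β - Pi.single (jsel k)
          ((μ / S) * (gradL l B β (jsel k) / hessL l B β (jsel k)))) i))
        - ∑ i, l i (B.mulVec βstar i))) ≤
      (1 - (μ ^ 2 / S ^ 2) * Θ ^ 2) *
        ((∑ i, l i (B.mulVec β i)) - ∑ i, l i (B.mulVec βstar i)) := by
  have hS : 0 < S := lt_of_lt_of_le hμ hμS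
  set b : Fin n → ℝ := B.mulVec β with hb
  set bs : Fin n → ℝ := B.mulVec βstar with hbs
  set Lβ : ℝ := ∑ i, l i (b i) with hLβ
  set Ls : ℝ := ∑ i, l i (bs i) with hLs
  set G : Fin N → ℝ := gradL l B β with hG
  set H : Fin N → ℝ := hessL l B β with hH
  -- Hessian bounds
  have hHμ : ∀ j, μ ≤ H j := by
    intro j
    have : μ * ∑ i, (B i j) ^ 2 ≤ ∑ i, deriv (deriv (l i)) (b i) * (B i j) ^ 2 := by
      rw [Finset.mul_sum]
      exact Finset.sum_le_sum fun i _ =>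
        mul_le_mul_of_nonneg_right (hlow i (b i)) (sq_nonneg _)
    rw [hunit j, mul_one] at this
    exact this
  have hHS : ∀ j, H j ≤ S := by
    intro j
    have : (∑ i, deriv (deriv (l i)) (b i) * (B i j) ^ 2) ≤ S * ∑ i, (B i j) ^ 2 := by
      rw [Finset.mul_sum]
      exact Finset.sum_le_sum fun i _ =>
        mul_le_mul_of_nonneg_right (hupp i (b i)) (sq_nonneg _)
    rw [hunit j, mul_one] at this
    exact this
  have hHpos : ∀ j, 0 < H j := fun j => lt_of_lt_of_le hμ (hHμ j)
  -- per-coordinate descent lemma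
  have descent : ∀ k, (∑ i, l i (B.mulVec
      (β - Pi.single (jsel k) ((μ / S) * (G (jsel k) / H (jsel k)))) i))
      ≤ Lβ - (μ / (2 * S)) * (G (jsel k) ^ 2 / H (jsel k)) := by
    intro k
    set j := jsel k
    set c : ℝ := (μ / S) * (G j / H j) with hc
    have hmv : ∀ i, B.mulVec (β - Pi.single j c) i = b i + -(B i j * c) := by
      intro i
      rw [Matrix.mulVec_sub, Matrix.mulVec_single]
      simp [hb]
      ring
    calc (∑ i, l i (B.mulVec (β - Pi.single j c) i))
        ≤ ∑ i, (l i (b i) + deriv (l i) (b i) * (-(B i j * c))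
            + S / 2 * (-(B i j * c)) ^ 2) := by
          apply Finset.sum_le_sum
          intro i _
          rw [hmv i]
          exact taylor_upper' (l i) (hdiff i) (hdiff2 i) S (hupp i) (b i) _
      _ = Lβ + (-c) * (∑ i, deriv (l i) (b i) * B i j)
            + (S / 2 * c ^ 2) * (∑ i, (B i j) ^ 2) := by
          rw [Finset.sum_add_distrib, Finset.sum_add_distrib, Finset.mul_sum, Finset.mul_sum]
          congr 1
          · congr 1
            exact Finset.sum_congr rfl fun i _ => by ring
          · exact Finset.sum_congr rfl fun i _ => by ring
      _ = Lβ + (-c * G j + S / 2 * c ^ 2) := by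
          rw [hunit j, mul_one]
          have : (∑ i, deriv (l i) (b i) * B i j) = G j := rfl
          rw [this]; ring
      _ ≤ Lβ - (μ / (2 * S)) * (G j ^ 2 / H j) := by
          have hHj := hHpos j
          have e : -c * G j + S / 2 * c ^ 2 + (μ / (2 * S)) * (G j ^ 2 / H j)
              = (μ * (G j / H j) ^ 2) * (μ - H j) / (2 * S) := by
            rw [hc]
            field_simp
            ring
          have h1 : (μ * (G j / H j) ^ 2) * (μ - H j) / (2 * S) ≤ 0 := by
            apply div_nonpos_of_nonpos_of_nonneg
            · apply mul_nonpos_of_nonneg_of_nonpos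
              · positivity
              · linarith [hHμ j]
            · linarith
          linarith [e ▸ h1]
  -- the gradient direction vector and its projection
  set cv : EuclideanSpace ℝ (Fin n) :=
    (WithLp.equiv 2 (Fin n → ℝ)).symm (fun i => deriv (l i) (b i)) with hcv
  set p : EuclideanSpace ℝ (Fin n) :=
    ((Submodule.orthogonalProjection (colSpan B) cv : colSpan B) : EuclideanSpace ℝ (Fin n)) with hp
  have hpmem : p ∈ colSpan B := SetLike.coe_mem _
  have hortho : ∀ w ∈ colSpan B, inner ℝ (cv - p) w = (0 : ℝ) :=
    fun w hw => (colSpan B).starProjection_inner_eq_zero cv w hw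
  -- gradient in terms of the projection
  have hgrad_eq : ∀ j, G j = ∑ i, B i j * p i := by
    intro j
    have hcol : ((WithLp.equiv 2 (Fin n → ℝ)).symm fun i => B i j) ∈ colSpan B :=
      Submodule.subset_span ⟨j, rfl⟩
    have h0 := hortho _ hcol
    rw [PiLp.inner_apply] at h0
    simp only [RCLike.inner_apply, WithLp.equiv_symm_apply, conj_trivial] at h0
    have h0' : ∑ i, (cv i - p i) * B i j = 0 := by
      simpa [PiLp.sub_apply, mul_comm] using h0
    have hcvi : ∀ i, cv i = deriv (l i) (b i) := fun i => rfl
    have : G j = ∑ i, cv i * B i j := by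
      simp only [hG, gradL, hcvi, hb]
    rw [this]
    have h0'' : (∑ i, cv i * B i j) - ∑ i, p i * B i j = 0 := by
      rw [← Finset.sum_sub_distrib, ← h0']
      exact Finset.sum_congr rfl fun i _ => by ring
    have heq : ∑ i, cv i * B i j = ∑ i, p i * B i j := by linarith
    rw [heq]
    exact Finset.sum_congr rfl fun i _ => mul_comm _ _
  -- strong convexity: optimality gap bounded by projection norm
  set P2 : ℝ := ∑ i, p i ^ 2 with hP2
  have hP2norm : ‖p‖ ^ 2 = P2 := by
    rw [EuclideanSpace.norm_eq,
      Real.sq_sqrt (Finset.sum_nonneg fun i _ => sq_nonneg (‖p i‖))]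
    exact Finset.sum_congr rfl fun i _ => by rw [Real.norm_eq_abs, sq_abs]
  have hgapP : 2 * μ * (Lβ - Ls) ≤ P2 := by
    set V : Fin n → ℝ := fun i => bs i - b i with hV
    have hstrong : Lβ + (∑ i, cv i * V i) + μ / 2 * (∑ i, V i ^ 2) ≤ Ls := by
      have : ∀ i, l i (b i) + deriv (l i) (b i) * V i + μ / 2 * V i ^ 2 ≤ l i (bs i) := by
        intro i
        have := taylor_lower' (l i) (hdiff i) (hdiff2 i) μ (hlow i) (b i) (V i)
        have heq : b i + V i = bs i := by simp [hV]
        rw [heq] at this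
        exact this
      calc Lβ + (∑ i, cv i * V i) + μ / 2 * (∑ i, V i ^ 2)
          = ∑ i, (l i (b i) + deriv (l i) (b i) * V i + μ / 2 * V i ^ 2) := by
            rw [Finset.sum_add_distrib, Finset.sum_add_distrib, Finset.mul_sum]
            rfl
        _ ≤ ∑ i, l i (bs i) := Finset.sum_le_sum fun i _ => this i
    -- v is in the column span
    have hvmem : ((WithLp.equiv 2 (Fin n → ℝ)).symm V) ∈ colSpan B := by
      have hVe : ((WithLp.equiv 2 (Fin n → ℝ)).symm V)
          = ∑ j, (βstar j - β j) • ((WithLp.equiv 2 (Fin n → ℝ)).symm fun i => B i j) := by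
        ext i
        simp only [WithLp.equiv_symm_apply, hV, hbs, hb, Matrix.mulVec, dotProduct]
        rw [WithLp.ofLp_sum, Finset.sum_apply]
        rw [← Finset.sum_sub_distrib]
        exact Finset.sum_congr rfl fun j _ => by
          simp [WithLp.equiv_symm_apply]
          ring
      rw [hVe]
      exact Submodule.sum_mem _ fun j _ =>
        Submodule.smul_mem _ _ (Submodule.subset_span ⟨j, rfl⟩)
    have hiV : ∑ i, cv i * V i = ∑ i, p i * V i := by
      have h0 := hortho _ hvmem
      rw [PiLp.inner_apply] at h0
      simp only [RCLike.inner_apply, WithLp.equiv_symm_apply, conj_trivial] at h0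
      have h0' : ∑ i, (cv i - p i) * V i = 0 := by
        simpa [PiLp.sub_apply, mul_comm] using h0
      have h0'' : (∑ i, cv i * V i) - ∑ i, p i * V i = 0 := by
        rw [← Finset.sum_sub_distrib, ← h0']
        exact Finset.sum_congr rfl fun i _ => by ring
      linarith
    have hsq : (0:ℝ) ≤ ∑ i, (μ * V i + p i) ^ 2 :=
      Finset.sum_nonneg fun i _ => sq_nonneg _
    have e1 : ∑ i, (μ * V i + p i) ^ 2
        = μ ^ 2 * (∑ i, V i ^ 2) + 2 * μ * (∑ i, p i * V i) + P2 := by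
      rw [hP2, Finset.mul_sum, Finset.mul_sum, ← Finset.sum_add_distrib, ← Finset.sum_add_distrib]
      exact Finset.sum_congr rfl fun i _ => by ring
    rw [hiV] at hstrong
    nlinarith [hstrong, hsq, e1, mul_le_mul_of_nonneg_left
      (show Lβ - Ls ≤ -(∑ i, p i * V i) - μ / 2 * (∑ i, V i ^ 2) by linarith)
      (le_of_lt (show (0:ℝ) < 2 * μ by linarith))]
  -- Φ-norm lower bound
  set M : Fin K → ℝ := fun k => (I k).sup' (hne k) (fun j => |G j|) with hM
  have hMnn : ∀ k, 0 ≤ M k := by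
    intro k
    have h := Finset.le_sup' (fun j => |G j|) (hjmem k)
    exact le_trans (abs_nonneg (G (jsel k))) h
  have hΘM : Θ * ‖p‖ ≤ ∑ k, φ k * M k := by
    by_cases hp0 : p = 0
    · rw [hp0, norm_zero, mul_zero]
      exact Finset.sum_nonneg fun k _ => mul_nonneg (hφ k) (hMnn k)
    · have := hΘ p hpmem hp0
      refine le_trans this (le_of_eq ?_)
      refine Finset.sum_congr rfl fun k _ => ?_
      congr 1
      exact Finset.sup'_congr _ rfl fun j _ => by rw [← hgrad_eq j]
  -- sum of squared decrements lower bound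
  have hMΓ : ∀ k, M k ^ 2 ≤ S * (G (jsel k) ^ 2 / H (jsel k)) := by
    intro k
    obtain ⟨j0, hj0m, hj0⟩ := Finset.exists_mem_eq_sup' (hne k) (fun j => |G j|)
    have h1 : M k ^ 2 = G j0 ^ 2 := by rw [hM]; simp only; rw [hj0, sq_abs]
    have h2 : G j0 ^ 2 ≤ S * (G j0 ^ 2 / H j0) := by
      rw [mul_div_assoc']
      rw [le_div_iff₀ (hHpos j0)]
      have := hHS j0
      nlinarith [sq_nonneg (G j0)]
    have h3 : G j0 ^ 2 / H j0 ≤ G (jsel k) ^ 2 / H (jsel k) := hjmax k j0 hj0m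
    have h4 : S * (G j0 ^ 2 / H j0) ≤ S * (G (jsel k) ^ 2 / H (jsel k)) :=
      mul_le_mul_of_nonneg_left h3 (le_of_lt hS)
    linarith [h1 ▸ h2]
  have hCS : (∑ k, φ k * M k) ^ 2 ≤ ∑ k, φ k * M k ^ 2 := by
    have := Finset.sum_mul_sq_le_sq_mul_sq Finset.univ (fun k => Real.sqrt (φ k))
      (fun k => Real.sqrt (φ k) * M k)
    have e1 : ∀ k : Fin K, Real.sqrt (φ k) * (Real.sqrt (φ k) * M k) = φ k * M k := by
      intro k; rw [← mul_assoc, Real.mul_self_sqrt (hφ k)]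
    have e2 : ∀ k : Fin K, Real.sqrt (φ k) ^ 2 = φ k := fun k => Real.sq_sqrt (hφ k)
    have e3 : ∀ k : Fin K, (Real.sqrt (φ k) * M k) ^ 2 = φ k * M k ^ 2 := by
      intro k; rw [mul_pow, e2]
    simp only [e1, e3] at this
    calc (∑ k, φ k * M k) ^ 2 ≤ (∑ k, Real.sqrt (φ k) ^ 2) * ∑ k, φ k * M k ^ 2 := this
      _ = ∑ k, φ k * M k ^ 2 := by
          simp only [e2]; rw [hφ1, one_mul]
  have hΓsum : Θ ^ 2 * P2 / S ≤ ∑ k, φ k * (G (jsel k) ^ 2 / H (jsel k)) := by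
    have h1 : (Θ * ‖p‖) ^ 2 ≤ (∑ k, φ k * M k) ^ 2 := by
      apply pow_le_pow_left₀ (by positivity) hΘM
    have h2 : ∑ k, φ k * M k ^ 2 ≤ S * ∑ k, φ k * (G (jsel k) ^ 2 / H (jsel k)) := by
      rw [Finset.mul_sum]
      apply Finset.sum_le_sum
      intro k _
      calc φ k * M k ^ 2 ≤ φ k * (S * (G (jsel k) ^ 2 / H (jsel k))) :=
            mul_le_mul_of_nonneg_left (hMΓ k) (hφ k)
        _ = S * (φ k * (G (jsel k) ^ 2 / H (jsel k))) := by ring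
    have h3 : (Θ * ‖p‖) ^ 2 = Θ ^ 2 * P2 := by rw [mul_pow, hP2norm]
    rw [div_le_iff₀ hS]
    calc Θ ^ 2 * P2 = (Θ * ‖p‖) ^ 2 := h3.symm
      _ ≤ (∑ k, φ k * M k) ^ 2 := h1
      _ ≤ ∑ k, φ k * M k ^ 2 := hCS
      _ ≤ S * ∑ k, φ k * (G (jsel k) ^ 2 / H (jsel k)) := h2
      _ = (∑ k, φ k * (G (jsel k) ^ 2 / H (jsel k))) * S := mul_comm _ _
  -- combine
  have hsum : (∑ k, φ k * ((∑ i, l i (B.mulVec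
      (β - Pi.single (jsel k) ((μ / S) * (G (jsel k) / H (jsel k)))) i)) - Ls))
      ≤ (Lβ - Ls) - (μ / (2 * S)) * ∑ k, φ k * (G (jsel k) ^ 2 / H (jsel k)) := by
    have : ∀ k : Fin K, φ k * ((∑ i, l i (B.mulVec
        (β - Pi.single (jsel k) ((μ / S) * (G (jsel k) / H (jsel k)))) i)) - Ls)
        ≤ φ k * ((Lβ - Ls) - (μ / (2 * S)) * (G (jsel k) ^ 2 / H (jsel k))) := by
      intro k
      apply mul_le_mul_of_nonneg_left _ (hφ k)
      linarith [descent k]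
    calc _ ≤ ∑ k, φ k * ((Lβ - Ls) - (μ / (2 * S)) * (G (jsel k) ^ 2 / H (jsel k))) :=
          Finset.sum_le_sum fun k _ => this k
      _ = ∑ k, (φ k * (Lβ - Ls)
            - (μ / (2 * S)) * (φ k * (G (jsel k) ^ 2 / H (jsel k)))) :=
          Finset.sum_congr rfl fun k _ => by ring
      _ = (∑ k, φ k * (Lβ - Ls))
            - ∑ k, (μ / (2 * S)) * (φ k * (G (jsel k) ^ 2 / H (jsel k))) :=
          Finset.sum_sub_distrib _ _
      _ = (∑ k, φ k) * (Lβ - Ls)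
            - (μ / (2 * S)) * ∑ k, φ k * (G (jsel k) ^ 2 / H (jsel k)) := by
          rw [← Finset.sum_mul, ← Finset.mul_sum]
      _ = (Lβ - Ls) - (μ / (2 * S)) * ∑ k, φ k * (G (jsel k) ^ 2 / H (jsel k)) := by
          rw [hφ1, one_mul]
  have hfin1 : (μ / (2 * S)) * (Θ ^ 2 * (2 * μ * (Lβ - Ls)) / S)
      ≤ (μ / (2 * S)) * ∑ k, φ k * (G (jsel k) ^ 2 / H (jsel k)) := by
    apply mul_le_mul_of_nonneg_left _ (by positivity)
    refine le_trans ?_ hΓsum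
    gcongr
  have hfinal : (Lβ - Ls) - (μ / (2 * S)) * (Θ ^ 2 * (2 * μ * (Lβ - Ls)) / S)
      = (1 - (μ ^ 2 / S ^ 2) * Θ ^ 2) * (Lβ - Ls) := by
    field_simp
  linarith [hsum, hfin1, hfinal ▸ (le_refl ((1 - (μ ^ 2 / S ^ 2) * Θ ^ 2) * (Lβ - Ls)))]
end

section
/- Let 0 < μ ≤ S, let l₁,…,l_n : ℝ → ℝ be twice differentiable with μ ≤ l_i''(t) ≤ S for all t and all i, let B be a real n×N matrix whose columns all have unit Euclidean norm, define L(β) = Σ_{i=1}^n l_i((Bβ)_i), and suppose β* is a global minimizer of L. Let {1,…,N} be partitioned into nonempty sets I(1),…,I(K), let φ₁,…,φ_K ≥ 0 with Σ_k φ_k = 1, define ‖x‖_Φ = Σ_k φ_k max_{j∈I(k)} |x_j|, and suppose Θ ≥ 0 satisfies ‖Bᵀc‖_Φ ≥ Θ‖c‖ for every nonzero c ∈ Range(B). Fix β⁰ ∈ ℝ^N and M ∈ ℕ. For each sequence u = (u₁,…,u_M) ∈ {1,…,K}^M define iterates β⁰_u = β⁰ and, for m = 1,…,M, β^m_u = β^{m−1}_u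 − (μ/S)(∇_{j_m} L(β^{m−1}_u)/∇²_{j_m} L(β^{m−1}_u)) e_{j_m}, where j_m ∈ I(u_m) maximizes ∇_j L(β^{m−1}_u)²/∇²_j L(β^{m−1}_u) over j ∈ I(u_m). Then Σ_{u ∈ {1,…,K}^M} (∏_{m=1}^M φ_{u_m}) (L(β^M_u) − L(β*)) ≤ (1 − (μ²/S²)Θ²)^M (L(β⁰) − L(β*)). -/
open Finset

/-- Second-order upper Taylor bound from a bound on the second derivative. -/
lemma taylor_upper_aux {f f' f'' : ℝ → ℝ} (hf : ∀ t, HasDerivAt f (f' t) t)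
    (hf' : ∀ t, HasDerivAt f' (f'' t) t) {C : ℝ} (hC : ∀ t, f'' t ≤ C) (t : ℝ) :
    f t ≤ f 0 + f' 0 * t + C / 2 * t ^ 2 := by
  set g : ℝ → ℝ := fun s => f 0 + f' 0 * s + C / 2 * s ^ 2 - f s with hgdef
  set φ : ℝ → ℝ := fun s => f' 0 + C * s - f' s with hφdef
  have hg : ∀ s, HasDerivAt g (φ s) s := by
    intro s
    have h1 : HasDerivAt (fun s : ℝ => f 0 + f' 0 * s + C / 2 * s ^ 2) (f' 0 + C * s) s := by
      have h2 := ((hasDerivAt_id s).const_mul (f' 0)).const_add (f 0)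
      have h3 := (hasDerivAt_pow 2 s).const_mul (C / 2)
      have := h2.add h3
      exact this.congr_deriv (by norm_num <;> ring)
    exact h1.sub (hf s)
  have hφ : ∀ s, HasDerivAt φ (C - f'' s) s := by
    intro s
    have h1 : HasDerivAt (fun s : ℝ => f' 0 + C * s) C s := by
      simpa using ((hasDerivAt_id s).const_mul C).const_add (f' 0)
    exact h1.sub (hf' s)
  have hmono : Monotone φ := by
    apply monotone_of_deriv_nonneg (fun s => (hφ s).differentiableAt)
    intro s
    rw [(hφ s).deriv]
    linarith [hC s]
  have hφ0 : φ 0 = 0 := by simp [hφdef]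
  have hgc : ∀ s, 0 ≤ s → 0 ≤ φ s := fun s hs => hφ0 ▸ hmono hs
  have hgc' : ∀ s, s ≤ 0 → φ s ≤ 0 := fun s hs => hφ0 ▸ hmono hs
  have hg0 : g 0 = 0 := by simp [hgdef]
  have key : 0 ≤ g t := by
    rcases le_or_gt 0 t with ht | ht
    · have : MonotoneOn g (Set.Icc 0 t) := by
        apply monotoneOn_of_deriv_nonneg (convex_Icc 0 t)
        · exact fun s _ => (hg s).differentiableAt.continuousAt.continuousWithinAt
        · exact fun s _ => (hg s).differentiableAt.differentiableWithinAt
        · intro s hs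
          rw [interior_Icc] at hs
          rw [(hg s).deriv]
          exact hgc s hs.1.le
      have := this (Set.left_mem_Icc.2 ht) (Set.right_mem_Icc.2 ht) ht
      simpa [hg0] using this
    · have : AntitoneOn g (Set.Icc t 0) := by
        apply antitoneOn_of_deriv_nonpos (convex_Icc t 0)
        · exact fun s _ => (hg s).differentiableAt.continuousAt.continuousWithinAt
        · exact fun s _ => (hg s).differentiableAt.differentiableWithinAt
        · intro s hs
          rw [interior_Icc] at hs
          rw [(hg s).deriv]
          exact hgc' s hs.2.le
      have := this (Set.left_mem_Icc.2 ht.le) (Set.right_mem_Icc.2 ht.le) ht.le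
      simpa [hg0] using this
  simpa [hgdef] using key

lemma taylor_lower_aux {f f' f'' : ℝ → ℝ} (hf : ∀ t, HasDerivAt f (f' t) t)
    (hf' : ∀ t, HasDerivAt f' (f'' t) t) {c : ℝ} (hc : ∀ t, c ≤ f'' t) (t : ℝ) :
    f 0 + f' 0 * t + c / 2 * t ^ 2 ≤ f t := by
  have := taylor_upper_aux (f := fun s => -f s) (f' := fun s => -f' s) (f'' := fun s => -f'' s)
    (fun s => (hf s).neg) (fun s => (hf' s).neg) (C := -c) (fun s => neg_le_neg (hc s)) t
  linarith

open Finset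

section
variable {n : ℕ} {μ S : ℝ} (l : Fin n → ℝ → ℝ)

lemma line_hasDeriv1 (hdiff : ∀ i, Differentiable ℝ (l i)) (a b : Fin n → ℝ) (t : ℝ) :
    HasDerivAt (fun t => ∑ i, l i (a i + t * b i))
      (∑ i, deriv (l i) (a i + t * b i) * b i) t := by
  apply HasDerivAt.fun_sum
  intro i _
  have hA : HasDerivAt (fun t : ℝ => a i + t * b i) (b i) t := by
    simpa using ((hasDerivAt_id t).mul_const (b i)).const_add (a i)
  exact ((hdiff i (a i + t * b i)).hasDerivAt).comp t hA

lemma line_hasDeriv2 (hdiff2 : ∀ i, Differentiable ℝ (deriv (l i))) (a b : Fin n → ℝ) (t : ℝ) :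
    HasDerivAt (fun t => ∑ i, deriv (l i) (a i + t * b i) * b i)
      (∑ i, deriv (deriv (l i)) (a i + t * b i) * b i ^ 2) t := by
  apply HasDerivAt.fun_sum
  intro i _
  have hA : HasDerivAt (fun t : ℝ => a i + t * b i) (b i) t := by
    simpa using ((hasDerivAt_id t).mul_const (b i)).const_add (a i)
  have := (((hdiff2 i (a i + t * b i)).hasDerivAt).comp t hA).mul_const (b i)
  exact this.congr_deriv (by ring)

lemma sum_loss_upper (hdiff : ∀ i, Differentiable ℝ (l i))
    (hdiff2 : ∀ i, Differentiable ℝ (deriv (l i)))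
    (hupp : ∀ i t, deriv (deriv (l i)) t ≤ S) (hS : 0 ≤ S)
    (a b : Fin n → ℝ) (t : ℝ) :
    ∑ i, l i (a i + t * b i) ≤ (∑ i, l i (a i)) + (∑ i, deriv (l i) (a i) * b i) * t
      + (S * ∑ i, b i ^ 2) / 2 * t ^ 2 := by
  have key := taylor_upper_aux (line_hasDeriv1 l hdiff a b) (line_hasDeriv2 l hdiff2 a b)
    (C := S * ∑ i, b i ^ 2) (fun s => by
      rw [Finset.mul_sum]
      exact Finset.sum_le_sum fun i _ =>
        mul_le_mul_of_nonneg_right (hupp i _) (sq_nonneg _)) t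
  simpa using key

lemma sum_loss_lower (hdiff : ∀ i, Differentiable ℝ (l i))
    (hdiff2 : ∀ i, Differentiable ℝ (deriv (l i)))
    (hlow : ∀ i t, μ ≤ deriv (deriv (l i)) t)
    (a b : Fin n → ℝ) (t : ℝ) :
    (∑ i, l i (a i)) + (∑ i, deriv (l i) (a i) * b i) * t
      + (μ * ∑ i, b i ^ 2) / 2 * t ^ 2 ≤ ∑ i, l i (a i + t * b i) := by
  have key := taylor_lower_aux (line_hasDeriv1 l hdiff a b) (line_hasDeriv2 l hdiff2 a b)
    (c := μ * ∑ i, b i ^ 2) (fun s => by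
      rw [Finset.mul_sum]
      exact Finset.sum_le_sum fun i _ =>
        mul_le_mul_of_nonneg_right (hlow i _) (sq_nonneg _)) t
  simpa using key

end
open Finset
lemma damped_step_ineq {μ S g h : ℝ} (hμ : 0 < μ) (hμh : μ ≤ h) (hμS : μ ≤ S) :
    g * (-(μ / S * (g / h))) + S / 2 * (μ / S * (g / h)) ^ 2 ≤ -(μ / (2 * S) * (g ^ 2 / h)) := by
  have hh : 0 < h := lt_of_lt_of_le hμ hμh
  have hS : 0 < S := lt_of_lt_of_le hμ hμS
  have key : 0 ≤ μ * g ^ 2 * (h - μ) := mul_nonneg (mul_nonneg hμ.le (sq_nonneg g)) (by linarith)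
  have h1 : g * (-(μ / S * (g / h))) + S / 2 * (μ / S * (g / h)) ^ 2
      = -(μ / (2 * S) * (g ^ 2 / h)) - (μ * g ^ 2 * (h - μ)) / (2 * S * h ^ 2) := by
    field_simp
    ring
  rw [h1]
  have : 0 ≤ (μ * g ^ 2 * (h - μ)) / (2 * S * h ^ 2) := div_nonneg key (by positivity)
  linarith
open Finset
open scoped RealInnerProductSpace

section
variable {n N K : ℕ} {μ S : ℝ}

-- membership of B.mulVec δ in colSpan
lemma mulVec_mem_colSpan (B : Matrix (Fin n) (Fin N) ℝ) (δ : Fin N → ℝ) :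
    ((WithLp.equiv 2 (Fin n → ℝ)).symm (B.mulVec δ)) ∈ colSpan B := by
  have : ((WithLp.equiv 2 (Fin n → ℝ)).symm (B.mulVec δ)) =
      ∑ j, δ j • ((WithLp.equiv 2 (Fin n → ℝ)).symm fun i => B i j) := by
    ext i
    rw [show ((∑ j, δ j • ((WithLp.equiv 2 (Fin n → ℝ)).symm fun i => B i j)) i)
        = ∑ j, δ j * B i j from by
      induction (univ : Finset (Fin N)) using Finset.induction with
      | empty => rfl
      | insert _ _ h ih => rw [Finset.sum_insert h, Finset.sum_insert h, ← ih]; rfl]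
    simp [Matrix.mulVec, dotProduct, mul_comm]
  rw [this]
  exact Submodule.sum_mem _ fun j _ =>
    Submodule.smul_mem _ _ (Submodule.subset_span ⟨j, rfl⟩)

set_option maxHeartbeats 1000000 in
lemma onestep_lemma
    (hμ : 0 < μ) (hμS : μ ≤ S)
    (l : Fin n → ℝ → ℝ)
    (hdiff : ∀ i, Differentiable ℝ (l i))
    (hdiff2 : ∀ i, Differentiable ℝ (deriv (l i)))
    (hlow : ∀ i t, μ ≤ deriv (deriv (l i)) t)
    (hupp : ∀ i t, deriv (deriv (l i)) t ≤ S)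
    (B : Matrix (Fin n) (Fin N) ℝ)
    (hunit : ∀ j, ∑ i, (B i j) ^ 2 = 1)
    (βstar : Fin N → ℝ)
    (hmin : ∀ β, (∑ i, l i (B.mulVec βstar i)) ≤ ∑ i, l i (B.mulVec β i))
    (I : Fin K → Finset (Fin N)) (hne : ∀ k, (I k).Nonempty)
    (φ : Fin K → ℝ) (hφ : ∀ k, 0 ≤ φ k) (hφ1 : ∑ k, φ k = 1)
    (Θ : ℝ) (hΘ0 : 0 ≤ Θ)
    (hΘ : ∀ c : EuclideanSpace ℝ (Fin n), c ∈ colSpan B → c ≠ 0 →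
      Θ * ‖c‖ ≤ ∑ k, φ k * ((I k).sup' (hne k) (fun j => |∑ i, B i j * c i|)))
    (jsel : (Fin N → ℝ) → Fin K → Fin N)
    (hjmem : ∀ β k, jsel β k ∈ I k)
    (hjmax : ∀ β k, ∀ j ∈ I k,
      (gradL l B β j) ^ 2 / hessL l B β j ≤
        (gradL l B β (jsel β k)) ^ 2 / hessL l B β (jsel β k))
    (β : Fin N → ℝ) :
    ∑ k, φ k * ((∑ i, l i (B.mulVec (β - Pi.single (jsel β k)
          ((μ / S) * (gradL l B β (jsel β k) / hessL l B β (jsel β k)))) i))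
        - ∑ i, l i (B.mulVec βstar i)) ≤
      (1 - (μ ^ 2 / S ^ 2) * Θ ^ 2) * ((∑ i, l i (B.mulVec β i)) - ∑ i, l i (B.mulVec βstar i)) := by
  have hS : 0 < S := lt_of_lt_of_le hμ hμS
  set a : Fin n → ℝ := B.mulVec β with ha
  set Lβ : ℝ := ∑ i, l i (a i) with hLβ
  set Lstar : ℝ := ∑ i, l i (B.mulVec βstar i) with hLstar
  -- hessian bounds
  have hhess_low : ∀ j, μ ≤ hessL l B β j := by
    intro j
    have : μ * ∑ i, (B i j) ^ 2 ≤ hessL l B β j := by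
      rw [Finset.mul_sum]
      exact Finset.sum_le_sum fun i _ => mul_le_mul_of_nonneg_right (hlow i _) (sq_nonneg _)
    rwa [hunit j, mul_one] at this
  have hhess_upp : ∀ j, hessL l B β j ≤ S := by
    intro j
    have : hessL l B β j ≤ S * ∑ i, (B i j) ^ 2 := by
      rw [Finset.mul_sum]
      exact Finset.sum_le_sum fun i _ => mul_le_mul_of_nonneg_right (hupp i _) (sq_nonneg _)
    rwa [hunit j, mul_one] at this
  -- projection of the gradient residual
  set r : EuclideanSpace ℝ (Fin n) :=
    (WithLp.equiv 2 (Fin n → ℝ)).symm (fun i => deriv (l i) (a i)) with hr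
  set c : EuclideanSpace ℝ (Fin n) := (Submodule.orthogonalProjectionOnto (colSpan B) r : EuclideanSpace ℝ (Fin n))
    with hc
  have hcmem : c ∈ colSpan B := (Submodule.orthogonalProjectionOnto (colSpan B) r).2
  have horth : ∀ w ∈ colSpan B, ⟪r - c, w⟫ = 0 := by
    intro w hw
    exact (Submodule.mem_orthogonal' _ _).1 (Submodule.sub_starProjection_mem_orthogonal (K := colSpan B) r) w hw
  -- gradient identity
  have hgrad_eq : ∀ j, gradL l B β j = ∑ i, B i j * c i := by
    intro j
    have hcol : ((WithLp.equiv 2 (Fin n → ℝ)).symm fun i => B i j) ∈ colSpan B :=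
      Submodule.subset_span ⟨j, rfl⟩
    have h0 := horth _ hcol
    have hinner : ∀ x : EuclideanSpace ℝ (Fin n),
        ⟪x, ((WithLp.equiv 2 (Fin n → ℝ)).symm fun i => B i j)⟫ = ∑ i, x i * B i j := by
      intro x
      simp [PiLp.inner_apply, RCLike.inner_apply, mul_comm]
    rw [hinner] at h0
    have : ∑ i, (r i - c i) * B i j = 0 := by
      simpa using h0
    have hsplit : ∑ i, r i * B i j = ∑ i, c i * B i j := by
      have h2 : (∑ i, r i * B i j) - ∑ i, c i * B i j = 0 := by
        rw [← Finset.sum_sub_distrib]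
        simpa [sub_mul] using this
      linarith
    unfold gradL
    calc ∑ i, deriv (l i) (a i) * B i j = ∑ i, r i * B i j := by rfl
      _ = ∑ i, c i * B i j := hsplit
      _ = ∑ i, B i j * c i := by simp [mul_comm]
  -- gap bound from strong convexity
  have hgap_nonneg : 0 ≤ Lβ - Lstar := by simp [hLβ, hLstar, ha]; linarith [hmin β]
  have hgap : Lβ - Lstar ≤ ‖c‖ ^ 2 / (2 * μ) := by
    set w : EuclideanSpace ℝ (Fin n) :=
      (WithLp.equiv 2 (Fin n → ℝ)).symm (B.mulVec (βstar - β)) with hw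
    have hwmem : w ∈ colSpan B := mulVec_mem_colSpan B (βstar - β)
    have hwi : ∀ i, (w : Fin n → ℝ) i = B.mulVec βstar i - a i := by
      intro i
      simp [hw, ha, Matrix.mulVec_sub]
    have hlower := sum_loss_lower (μ := μ) l hdiff hdiff2 hlow a (fun i => w i) 1
    simp only [one_mul] at hlower
    have hsum_eq : (∑ i, l i (a i + w i)) = Lstar :=
      Finset.sum_congr rfl fun i _ => congrArg (l i) (by rw [hwi i]; ring)
    rw [hsum_eq] at hlower
    -- inner product bound
    have hinner_eq : ∑ i, deriv (l i) (a i) * w i = ⟪c, w⟫ := by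
      have h0 := horth w hwmem
      have : ⟪r, w⟫ - ⟪c, w⟫ = 0 := by
        rw [← inner_sub_left]; exact h0
      have hrw : ⟪r, w⟫ = ∑ i, deriv (l i) (a i) * w i := by
        simp [PiLp.inner_apply, RCLike.inner_apply, hr, mul_comm]
      linarith [hrw ▸ this]
    have hcs : -(‖c‖ * ‖w‖) ≤ ⟪c, w⟫ := neg_le_of_neg_le (by
      have := abs_real_inner_le_norm c w
      rw [abs_le] at this
      linarith [this.1])
    have hwnorm : ∑ i, w i ^ 2 = ‖w‖ ^ 2 := by
      rw [← real_inner_self_eq_norm_sq]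
      simp only [PiLp.inner_apply, RCLike.inner_apply, conj_trivial, sq]
    rw [hwnorm] at hlower
    have key : Lstar ≥ Lβ + ⟪c, w⟫ + μ * ‖w‖ ^ 2 / 2 := by
      rw [hinner_eq] at hlower
      simp only [mul_one] at hlower
      unfold Lstar Lβ
      linarith [hlower]
    have : Lβ - Lstar ≤ ‖c‖ * ‖w‖ - μ * ‖w‖ ^ 2 / 2 := by linarith [hcs]
    have h2 : ‖c‖ * ‖w‖ - μ * ‖w‖ ^ 2 / 2 ≤ ‖c‖ ^ 2 / (2 * μ) := by
      rw [le_div_iff₀ (by positivity)]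
      nlinarith [sq_nonneg (‖c‖ - μ * ‖w‖)]
    linarith
  -- per-k descent bound
  set s : Fin K → ℝ := fun k => (I k).sup' (hne k) (fun j => |gradL l B β j|) with hsdef
  have hs_nonneg : ∀ k, 0 ≤ s k := by
    intro k
    obtain ⟨j, hj⟩ := hne k
    exact le_trans (abs_nonneg (gradL l B β j))
      (Finset.le_sup' (fun j => |gradL l B β j|) hj)
  have hstep_bound : ∀ k, (∑ i, l i (B.mulVec (β - Pi.single (jsel β k)
        ((μ / S) * (gradL l B β (jsel β k) / hessL l B β (jsel β k)))) i))
      ≤ Lβ - μ / (2 * S) * (s k ^ 2 / S) := by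
    intro k
    set j0 := jsel β k with hj0
    set g := gradL l B β j0 with hg
    set h := hessL l B β j0 with hhdef
    have hh : 0 < h := lt_of_lt_of_le hμ (hhess_low j0)
    set t : ℝ := -((μ / S) * (g / h)) with ht
    have hmv : ∀ i, B.mulVec (β - Pi.single j0 ((μ / S) * (g / h))) i = a i + t * B i j0 := by
      intro i
      rw [Matrix.mulVec_sub]
      have hsingle : B.mulVec (Pi.single j0 ((μ / S) * (g / h))) i
          = B i j0 * ((μ / S) * (g / h)) := by
        simp [Matrix.mulVec, dotProduct, Pi.single_apply, mul_ite]
      simp only [Pi.sub_apply, hsingle, ht, ha]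
      ring
    have upper := sum_loss_upper (S := S) l hdiff hdiff2 hupp hS.le a (fun i => B i j0) t
    simp only [hunit j0, mul_one] at upper
    have hgg : (∑ i, deriv (l i) (a i) * B i j0) = g := rfl
    rw [hgg] at upper
    have hLL : (∑ i, l i (B.mulVec (β - Pi.single j0 ((μ / S) * (g / h))) i))
        = ∑ i, l i (a i + t * B i j0) :=
      Finset.sum_congr rfl fun i _ => congrArg (l i) (hmv i)
    have hdamp := damped_step_ineq (g := g) hμ (hhess_low j0) hμS
    have hstep1 : (∑ i, l i (B.mulVec (β - Pi.single j0 ((μ / S) * (g / h))) i))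
        ≤ Lβ - μ / (2 * S) * (g ^ 2 / h) := by
      rw [hLL]
      have ht2 : g * t + S / 2 * t ^ 2
          = g * (-(μ / S * (g / h))) + S / 2 * (μ / S * (g / h)) ^ 2 := by
        rw [ht]; ring
      calc ∑ i, l i (a i + t * B i j0) ≤ Lβ + (g * t + S / 2 * t ^ 2) := by
            rw [hLβ]; linarith [upper]
        _ ≤ Lβ + -(μ / (2 * S) * (g ^ 2 / h)) := by rw [ht2]; linarith [hdamp]
        _ = Lβ - μ / (2 * S) * (g ^ 2 / h) := by ring
    -- compare with the sup'
    obtain ⟨jm, hjm, hjsup⟩ := Finset.exists_mem_eq_sup' (hne k) (fun j => |gradL l B β j|)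
    have h1 : gradL l B β jm ^ 2 / hessL l B β jm ≤ g ^ 2 / h := hjmax β k jm hjm
    have h2 : gradL l B β jm ^ 2 / S ≤ gradL l B β jm ^ 2 / hessL l B β jm := by
      gcongr
      · exact lt_of_lt_of_le hμ (hhess_low jm)
      · exact hhess_upp jm
    have hsq : s k ^ 2 = gradL l B β jm ^ 2 := by
      rw [hsdef]; simp only []; rw [hjsup]; exact sq_abs _
    have h3 : s k ^ 2 / S ≤ g ^ 2 / h := by rw [hsq]; linarith
    have h4 : μ / (2 * S) * (s k ^ 2 / S) ≤ μ / (2 * S) * (g ^ 2 / h) :=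
      mul_le_mul_of_nonneg_left h3 (by positivity)
    linarith
  -- key lower bound on the expected squared gradient sup
  have hkey : 2 * μ * Θ ^ 2 * (Lβ - Lstar) ≤ ∑ k, φ k * s k ^ 2 := by
    have hrhs_nonneg : 0 ≤ ∑ k, φ k * s k ^ 2 :=
      Finset.sum_nonneg fun k _ => mul_nonneg (hφ k) (sq_nonneg _)
    by_cases hczero : c = 0
    · have hc0 : ‖c‖ = 0 := by rw [hczero]; simp
      have : Lβ - Lstar ≤ 0 := by rw [hc0] at hgap; simpa using hgap
      have hzero : Lβ - Lstar = 0 := le_antisymm this hgap_nonneg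
      rw [hzero]
      simpa using hrhs_nonneg
    · have hT := hΘ c hcmem hczero
      have hsup_congr : ∀ k, (I k).sup' (hne k) (fun j => |∑ i, B i j * c i|) = s k := by
        intro k
        exact Finset.sup'_congr (hne k) rfl (fun j _ => by rw [← hgrad_eq j])
      rw [Finset.sum_congr rfl (fun k _ => by rw [hsup_congr k])] at hT
      have hcs2 := Finset.sum_mul_sq_le_sq_mul_sq univ
        (fun k => Real.sqrt (φ k)) (fun k => Real.sqrt (φ k) * s k)
      have e1 : (∑ k, Real.sqrt (φ k) * (Real.sqrt (φ k) * s k)) = ∑ k, φ k * s k :=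
        Finset.sum_congr rfl fun k _ => by
          rw [← mul_assoc, Real.mul_self_sqrt (hφ k)]
      have e2 : (∑ k, Real.sqrt (φ k) ^ 2) = 1 := by
        rw [Finset.sum_congr rfl fun k _ => Real.sq_sqrt (hφ k)]; exact hφ1
      have e3 : (∑ k, (Real.sqrt (φ k) * s k) ^ 2) = ∑ k, φ k * s k ^ 2 :=
        Finset.sum_congr rfl fun k _ => by
          rw [mul_pow, Real.sq_sqrt (hφ k)]
      rw [e1, e2, e3, one_mul] at hcs2
      have hΘc_nonneg : 0 ≤ Θ * ‖c‖ := mul_nonneg hΘ0 (norm_nonneg _)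
      have h5 : (Θ * ‖c‖) ^ 2 ≤ (∑ k, φ k * s k) ^ 2 := pow_le_pow_left₀ hΘc_nonneg hT 2
      have h6 : 2 * μ * (Lβ - Lstar) ≤ ‖c‖ ^ 2 := by
        have hmul := mul_le_mul_of_nonneg_left hgap
          (le_of_lt (by positivity : (0:ℝ) < 2 * μ))
        have hcanc : (2 * μ) * (‖c‖ ^ 2 / (2 * μ)) = ‖c‖ ^ 2 := by
          field_simp
        linarith
      have h7 : 2 * μ * Θ ^ 2 * (Lβ - Lstar) ≤ Θ ^ 2 * ‖c‖ ^ 2 := by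
        have := mul_le_mul_of_nonneg_left h6 (sq_nonneg Θ)
        linarith
      have h8 : (Θ * ‖c‖) ^ 2 = Θ ^ 2 * ‖c‖ ^ 2 := by ring
      linarith
  -- assemble
  have hsum1 : ∑ k, φ k * ((∑ i, l i (B.mulVec (β - Pi.single (jsel β k)
        ((μ / S) * (gradL l B β (jsel β k) / hessL l B β (jsel β k)))) i)) - Lstar)
      ≤ ∑ k, φ k * ((Lβ - Lstar) - μ / (2 * S) * (s k ^ 2 / S)) :=
    Finset.sum_le_sum fun k _ =>
      mul_le_mul_of_nonneg_left (by linarith [hstep_bound k]) (hφ k)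
  have hsum2 : (∑ k, φ k * ((Lβ - Lstar) - μ / (2 * S) * (s k ^ 2 / S)))
      = (Lβ - Lstar) - μ / (2 * S ^ 2) * ∑ k, φ k * s k ^ 2 := by
    have e : ∀ k, φ k * ((Lβ - Lstar) - μ / (2 * S) * (s k ^ 2 / S))
        = φ k * (Lβ - Lstar) - μ / (2 * S ^ 2) * (φ k * s k ^ 2) := fun k => by
      field_simp
    rw [Finset.sum_congr rfl fun k _ => e k, Finset.sum_sub_distrib,
      ← Finset.sum_mul, hφ1, one_mul, ← Finset.mul_sum]
  have hid : μ / (2 * S ^ 2) * (2 * μ * Θ ^ 2 * (Lβ - Lstar))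
      = μ ^ 2 / S ^ 2 * Θ ^ 2 * (Lβ - Lstar) := by
    field_simp
  have hcoef : (0:ℝ) ≤ μ / (2 * S ^ 2) := by positivity
  have h9 := mul_le_mul_of_nonneg_left hkey hcoef
  rw [hid] at h9
  calc ∑ k, φ k * ((∑ i, l i (B.mulVec (β - Pi.single (jsel β k)
        ((μ / S) * (gradL l B β (jsel β k) / hessL l B β (jsel β k)))) i)) - Lstar)
      ≤ (Lβ - Lstar) - μ / (2 * S ^ 2) * ∑ k, φ k * s k ^ 2 := by
        rw [← hsum2]; exact hsum1
    _ ≤ (1 - μ ^ 2 / S ^ 2 * Θ ^ 2) * (Lβ - Lstar) := by nlinarith [h9]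

end


/-- Theorem 1 of the paper: global linear convergence in expectation of the Heterogeneous
Newton Boosting Machine in coordinate-descent form with learning rate `ε = μ / S`.
At each of `M` iterations a subclass index `u m` is drawn independently with probability
`φ (u m)`, the descent coordinate `jsel β k ∈ I k` maximizes the squared Newton decrement
`∇_j L(β)² / ∇²_j L(β)` over `I k`, and a damped Newton step is taken along it. The
expectation over all draws (weighted sum over sequences `u` with weights `∏ m, φ (u m)`)
of the optimality gap contracts by `(1 - (μ²/S²) Θ²)^M`. -/
theorem hnbm_global_linear_convergence {n N K M : ℕ} {μ S : ℝ}
    (hμ : 0 < μ) (hμS : μ ≤ S)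
    (l : Fin n → ℝ → ℝ)
    (hdiff : ∀ i, Differentiable ℝ (l i))
    (hdiff2 : ∀ i, Differentiable ℝ (deriv (l i)))
    (hlow : ∀ i t, μ ≤ deriv (deriv (l i)) t)
    (hupp : ∀ i t, deriv (deriv (l i)) t ≤ S)
    (B : Matrix (Fin n) (Fin N) ℝ)
    (hunit : ∀ j, ∑ i, (B i j) ^ 2 = 1)
    (βstar : Fin N → ℝ)
    (hmin : ∀ β, (∑ i, l i (B.mulVec βstar i)) ≤ ∑ i, l i (B.mulVec β i))
    (I : Fin K → Finset (Fin N)) (hne : ∀ k, (I k).Nonempty)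
    (hdisj : ∀ k k', k ≠ k' → Disjoint (I k) (I k'))
    (hcover : ∀ j, ∃ k, j ∈ I k)
    (φ : Fin K → ℝ) (hφ : ∀ k, 0 ≤ φ k) (hφ1 : ∑ k, φ k = 1)
    (Θ : ℝ) (hΘ0 : 0 ≤ Θ)
    (hΘ : ∀ c : EuclideanSpace ℝ (Fin n), c ∈ colSpan B → c ≠ 0 →
      Θ * ‖c‖ ≤ ∑ k, φ k * ((I k).sup' (hne k) (fun j => |∑ i, B i j * c i|)))
    (β0 : Fin N → ℝ)
    (jsel : (Fin N → ℝ) → Fin K → Fin N)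
    (hjmem : ∀ β k, jsel β k ∈ I k)
    (hjmax : ∀ β k, ∀ j ∈ I k,
      (gradL l B β j) ^ 2 / hessL l B β j ≤
        (gradL l B β (jsel β k)) ^ 2 / hessL l B β (jsel β k))
    (βseq : (Fin M → Fin K) → ℕ → (Fin N → ℝ))
    (hβ0 : ∀ u, βseq u 0 = β0)
    (hstep : ∀ (u : Fin M → Fin K) (m : Fin M),
      βseq u ((m : ℕ) + 1) = βseq u m -
        Pi.single (jsel (βseq u m) (u m))
          ((μ / S) * (gradL l B (βseq u m) (jsel (βseq u m) (u m)) /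
            hessL l B (βseq u m) (jsel (βseq u m) (u m))))) :
    (∑ u : Fin M → Fin K, (∏ m, φ (u m)) *
        ((∑ i, l i (B.mulVec (βseq u M) i)) - ∑ i, l i (B.mulVec βstar i))) ≤
      (1 - (μ ^ 2 / S ^ 2) * Θ ^ 2) ^ M *
        ((∑ i, l i (B.mulVec β0 i)) - ∑ i, l i (B.mulVec βstar i)) := by
  have hS : 0 < S := lt_of_lt_of_le hμ hμS
  -- nondegeneracy: K ≥ 1
  have hK : 0 < K := by
    by_contra hcon
    push_neg at hcon
    interval_cases K
    simp at hφ1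
  obtain ⟨j0, _⟩ := hne ⟨0, hK⟩
  -- Θ ≤ 1
  have hΘ1 : Θ ≤ 1 := by
    set c0 : EuclideanSpace ℝ (Fin n) :=
      (WithLp.equiv 2 (Fin n → ℝ)).symm (fun i => B i j0) with hc0
    have hc0mem : c0 ∈ colSpan B := Submodule.subset_span ⟨j0, rfl⟩
    have hc0sq : ‖c0‖ ^ 2 = 1 := by
      rw [← real_inner_self_eq_norm_sq]
      simp only [PiLp.inner_apply, RCLike.inner_apply, conj_trivial]
      rw [Finset.sum_congr rfl fun i _ => by
        show c0 i * c0 i = (B i j0) ^ 2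
        simp [hc0, sq]]
      exact hunit j0
    have hc0norm : ‖c0‖ = 1 := by
      rw [← Real.sqrt_sq (norm_nonneg c0), hc0sq, Real.sqrt_one]
    have hc0ne : c0 ≠ 0 := by
      intro h
      rw [h] at hc0norm
      simp at hc0norm
    have hT := hΘ c0 hc0mem hc0ne
    rw [hc0norm, mul_one] at hT
    refine le_trans hT ?_
    calc ∑ k, φ k * ((I k).sup' (hne k) fun j => |∑ i, B i j * c0 i|)
        ≤ ∑ k, φ k * 1 := by
          apply Finset.sum_le_sum
          intro k _
          apply mul_le_mul_of_nonneg_left _ (hφ k)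
          apply Finset.sup'_le
          intro j _
          have hcs := Finset.sum_mul_sq_le_sq_mul_sq univ (fun i => B i j) (fun i => c0 i)
          rw [hunit j, one_mul] at hcs
          have hc0sum : (∑ i, c0 i ^ 2) = 1 := by
            rw [Finset.sum_congr rfl fun i _ => by
              show c0 i ^ 2 = (B i j0) ^ 2
              simp [hc0]]
            exact hunit j0
          rw [hc0sum] at hcs
          nlinarith [abs_nonneg (∑ i, B i j * c0 i), sq_abs (∑ i, B i j * c0 i)]
      _ = 1 := by simp [hφ1]
  have hρ0 : (0:ℝ) ≤ 1 - μ ^ 2 / S ^ 2 * Θ ^ 2 := by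
    have hμ2 : μ ^ 2 ≤ S ^ 2 := by nlinarith
    have hΘ2 : Θ ^ 2 ≤ 1 := by nlinarith
    have h1 : μ ^ 2 * Θ ^ 2 ≤ S ^ 2 := by nlinarith [sq_nonneg μ, sq_nonneg Θ]
    have h2 : μ ^ 2 / S ^ 2 * Θ ^ 2 ≤ 1 := by
      rw [div_mul_eq_mul_div, div_le_one (by positivity)]
      exact h1
    linarith
  set ρ : ℝ := 1 - μ ^ 2 / S ^ 2 * Θ ^ 2 with hρ
  set G : (Fin N → ℝ) → ℝ :=
    fun β => (∑ i, l i (B.mulVec β i)) - ∑ i, l i (B.mulVec βstar i) with hG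
  set st : (Fin N → ℝ) → Fin K → (Fin N → ℝ) := fun β k =>
    β - Pi.single (jsel β k) ((μ / S) * (gradL l B β (jsel β k) / hessL l B β (jsel β k)))
    with hst
  have honestep : ∀ β, ∑ k, φ k * G (st β k) ≤ ρ * G β := fun β =>
    onestep_lemma hμ hμS l hdiff hdiff2 hlow hupp B hunit βstar hmin I hne φ hφ hφ1
      Θ hΘ0 hΘ jsel hjmem hjmax β
  -- agreement
  have hagree : ∀ m : ℕ, m ≤ M → ∀ u v : Fin M → Fin K,
      (∀ m' : Fin M, (m' : ℕ) < m → u m' = v m') → βseq u m = βseq v m := by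
    intro m
    induction m with
    | zero => intro _ u v _; rw [hβ0, hβ0]
    | succ m ih =>
      intro hm u v hagr
      have hmM : m < M := hm
      have h1 : βseq u m = βseq v m :=
        ih (le_of_lt hmM) u v fun m' hm' => hagr m' (lt_trans hm' (Nat.lt_succ_self m))
      have h2 : βseq u (m + 1) = st (βseq u m) (u ⟨m, hmM⟩) := hstep u ⟨m, hmM⟩
      have h3 : βseq v (m + 1) = st (βseq v m) (v ⟨m, hmM⟩) := hstep v ⟨m, hmM⟩
      rw [h2, h3, h1, hagr ⟨m, hmM⟩ (Nat.lt_succ_self m)]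
  -- main induction
  have hmain : ∀ m : ℕ, m ≤ M →
      (∑ u : Fin M → Fin K, (∏ m', φ (u m')) * G (βseq u m)) ≤ ρ ^ m * G β0 := by
    intro m
    induction m with
    | zero =>
      intro _
      rw [Finset.sum_congr rfl fun u _ => by rw [hβ0 u], ← Finset.sum_mul]
      have hw1 : (∑ u : Fin M → Fin K, ∏ m', φ (u m')) = 1 := by
        rw [← Fintype.piFinset_univ, ← Finset.prod_univ_sum]
        simp [hφ1]
      rw [hw1]
      simp
    | succ m ih =>
      intro hm1
      have hmM : m < M := lt_of_lt_of_le (Nat.lt_succ_self m) hm1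
      set mF : Fin M := ⟨m, hmM⟩ with hmF
      set e := Equiv.piSplitAt mF (fun _ : Fin M => Fin K) with he
      have he1 : ∀ p : Fin K × ({j : Fin M // j ≠ mF} → Fin K), e.symm p mF = p.1 := by
        intro p; simp [he, Equiv.piSplitAt_symm_apply]
      have he2 : ∀ (p : Fin K × ({j : Fin M // j ≠ mF} → Fin K)) (j : {j : Fin M // j ≠ mF}),
          e.symm p (j : Fin M) = p.2 j := by
        intro p j
        simp [he, Equiv.piSplitAt_symm_apply, j.2]
      set βm : ({j : Fin M // j ≠ mF} → Fin K) → (Fin N → ℝ) :=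
        fun v => βseq (e.symm (⟨0, hK⟩, v)) m with hβmdef
      have hβm : ∀ (k : Fin K) (v : {j : Fin M // j ≠ mF} → Fin K),
          βseq (e.symm (k, v)) m = βm v := by
        intro k v
        apply hagree m (le_of_lt hmM)
        intro m' hm'
        have hne' : m' ≠ mF := by
          intro h
          rw [h] at hm'
          exact absurd hm' (lt_irrefl m)
        rw [show m' = ((⟨m', hne'⟩ : {j : Fin M // j ≠ mF}) : Fin M) from rfl,
          he2 (k, v) ⟨m', hne'⟩, he2 (⟨0, hK⟩, v) ⟨m', hne'⟩]
      have hsplit_w : ∀ u : Fin M → Fin K,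
          (∏ m', φ (u m')) = φ (u mF) * ∏ j : {j : Fin M // j ≠ mF}, φ (u j) := by
        intro u
        rw [Fintype.prod_eq_mul_prod_compl mF]
        congr 1
        exact (Finset.prod_subtype ({mF}ᶜ : Finset (Fin M)) (by simp) (fun j => φ (u j)))
      have hWnn : ∀ v : {j : Fin M // j ≠ mF} → Fin K,
          (0:ℝ) ≤ ∏ j, φ (v j) := fun v => Finset.prod_nonneg fun j _ => hφ (v j)
      have hsum_split : ∀ F : (Fin N → ℝ) → Fin K → ℝ,
          (∑ u : Fin M → Fin K, (∏ m', φ (u m')) * F (βseq u m) (u mF))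
          = ∑ v : {j : Fin M // j ≠ mF} → Fin K, ∑ k : Fin K,
              (φ k * ∏ j, φ (v j)) * F (βm v) k := by
        intro F
        rw [← Fintype.sum_equiv e.symm
          (fun p : Fin K × ({j : Fin M // j ≠ mF} → Fin K) =>
            (φ p.1 * ∏ j, φ (p.2 j)) * F (βm p.2) p.1)
          (fun u => (∏ m', φ (u m')) * F (βseq u m) (u mF))
          (fun p => by
            obtain ⟨k, v⟩ := p
            show (φ k * ∏ j : {j : Fin M // j ≠ mF}, φ (v j)) * F (βm v) k
              = (∏ m', φ (e.symm (k, v) m')) * F (βseq (e.symm (k, v)) m) (e.symm (k, v) mF)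
            rw [hsplit_w (e.symm (k, v)), he1 (k, v), hβm k v]
            congr 2
            exact Finset.prod_congr rfl fun j _ => by rw [he2 (k, v) j])]
        rw [Fintype.sum_prod_type]
        exact Finset.sum_comm
      have hstep_eq : ∀ u : Fin M → Fin K,
          βseq u (m + 1) = st (βseq u m) (u mF) := fun u => hstep u mF
      calc ∑ u : Fin M → Fin K, (∏ m', φ (u m')) * G (βseq u (m + 1))
          = ∑ u : Fin M → Fin K, (∏ m', φ (u m')) * G (st (βseq u m) (u mF)) := by
            exact Finset.sum_congr rfl fun u _ => by rw [hstep_eq u]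
        _ = ∑ v : {j : Fin M // j ≠ mF} → Fin K, ∑ k : Fin K,
              (φ k * ∏ j, φ (v j)) * G (st (βm v) k) :=
            hsum_split (fun β k => G (st β k))
        _ = ∑ v : {j : Fin M // j ≠ mF} → Fin K,
              (∏ j, φ (v j)) * ∑ k : Fin K, φ k * G (st (βm v) k) := by
            apply Finset.sum_congr rfl
            intro v _
            rw [Finset.mul_sum]
            exact Finset.sum_congr rfl fun k _ => by ring
        _ ≤ ∑ v : {j : Fin M // j ≠ mF} → Fin K,
              (∏ j, φ (v j)) * (ρ * G (βm v)) :=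
            Finset.sum_le_sum fun v _ =>
              mul_le_mul_of_nonneg_left (honestep (βm v)) (hWnn v)
        _ = ρ * ∑ v : {j : Fin M // j ≠ mF} → Fin K, ∑ k : Fin K,
              (φ k * ∏ j, φ (v j)) * G (βm v) := by
            rw [Finset.mul_sum]
            apply Finset.sum_congr rfl
            intro v _
            have hv : (∑ k : Fin K, (φ k * ∏ j : {j : Fin M // j ≠ mF}, φ (v j)) * G (βm v))
                = (∑ k : Fin K, φ k) * ((∏ j : {j : Fin M // j ≠ mF}, φ (v j)) * G (βm v)) := by
              rw [Finset.sum_mul]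
              exact Finset.sum_congr rfl fun k _ => by ring
            rw [hv, hφ1, one_mul]
            ring
        _ = ρ * ∑ u : Fin M → Fin K, (∏ m', φ (u m')) * G (βseq u m) := by
            rw [hsum_split (fun β _ => G β)]
        _ ≤ ρ * (ρ ^ m * G β0) :=
            mul_le_mul_of_nonneg_left (ih (le_of_lt hmM)) hρ0
        _ = ρ ^ (m + 1) * G β0 := by ring
  exact hmain M le_rfl
end
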